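/- arXiv:1707.05382 — 8 statements merged into one kernel-verified Lean document; each statement's English description precedes it below -/
import Mathlib

section
/- Let R be a commutative ring with identity and let M_i, i ∈ I, be R-modules. The following are equivalent: (i) Ann(m_i) + Ann(m_j) = R for all i ≠ j in I and all m_i ∈ M_i, m_j ∈ M_j; (ii) every submodule of the direct sum ⊕_{i∈I} M_i is of the form ⊕_{i∈I} N_i, where N_i is a submodule of M_i for each i ∈ I (identifying each M_i with its image under the canonical injection). -/
universe v

/-- A submodule `P` of an `R`-module `M` is prime if `P ≠ M` and whenever `r • m ∈ P`,
either `m ∈ P` or `r • M ⊆ P`. -/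
def IsPrimeSubmodule {R M : Type*} [CommRing R] [AddCommGroup M] [Module R M]
    (P : Submodule R M) : Prop :=
  P ≠ ⊤ ∧ ∀ (r : R) (m : M), r • m ∈ P → m ∈ P ∨ ∀ x : M, r • x ∈ P

/-- The defining condition for a (prime) submodule `P` to be coprimely structured:
for every family `{N_i}` of submodules with `N_i + P = M` for all `i`,
the intersection `⋂ N_i` is not contained in `P`. -/
def CoprimelyStructuredAt {R M : Type*} [CommRing R] [AddCommGroup M] [Module R M]
    (P : Submodule R M) : Prop :=
  ∀ (ι : Type*) (N : ι → Submodule R M), (∀ i, N i ⊔ P = ⊤) → ¬ (⨅ i, N i) ≤ P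

/-- `M` is a coprimely structured `R`-module if every prime submodule is coprimely
structured. -/
def CoprimelyStructured (R M : Type*) [CommRing R] [AddCommGroup M] [Module R M] : Prop :=
  ∀ P : Submodule R M, IsPrimeSubmodule P → CoprimelyStructuredAt.{_, _, v} P

/-- The defining condition for a (prime) submodule `P` to be strongly prime: for every
family `{N_i}` of submodules with `⋂ N_i ⊆ P`, some `N_j ⊆ P`. -/
def StronglyPrimeAt {R M : Type*} [CommRing R] [AddCommGroup M] [Module R M]
    (P : Submodule R M) : Prop :=
  ∀ (ι : Type*) (N : ι → Submodule R M), (⨅ i, N i) ≤ P → ∃ j, N j ≤ P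

/-- `M` is strongly 0-dimensional if every prime submodule is strongly prime. -/
def StronglyZeroDimensional (R M : Type*) [CommRing R] [AddCommGroup M] [Module R M] : Prop :=
  ∀ P : Submodule R M, IsPrimeSubmodule P → StronglyPrimeAt.{_, _, v} P

/-- `M` is zero-dimensional if every prime submodule of `M` is a maximal submodule. -/
def ZeroDimensionalModule (R M : Type*) [CommRing R] [AddCommGroup M] [Module R M] : Prop :=
  ∀ P : Submodule R M, IsPrimeSubmodule P → IsCoatom P

/-- `M` is a multiplication `R`-module if every submodule is of the form `I • M` for
some ideal `I` of `R`. -/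
def IsMultiplicationModule (R M : Type*) [CommRing R] [AddCommGroup M] [Module R M] : Prop :=
  ∀ N : Submodule R M, ∃ I : Ideal R, N = I • (⊤ : Submodule R M)

/-- The radical of a submodule `N`: the intersection of all prime submodules containing
`N` (equal to `M` if there are none). -/
def submoduleRad {R M : Type*} [CommRing R] [AddCommGroup M] [Module R M]
    (N : Submodule R M) : Submodule R M :=
  sInf {P | IsPrimeSubmodule P ∧ N ≤ P}

/-- A family `{N_i}` of submodules of a multiplication module satisfies property (*) if
for each `x ∈ M` there is `n ∈ ℕ` such that `x ∈ rad (N_i)` implies `x ^ n ⊆ N_i`,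
where `x ^ n` denotes `I ^ n • M` for an ideal `I` with `R x = I • M`. -/
def SatisfiesStar {R M ι : Type*} [CommRing R] [AddCommGroup M] [Module R M]
    (N : ι → Submodule R M) : Prop :=
  ∀ x : M, ∃ n : ℕ, ∀ i, x ∈ submoduleRad (N i) →
    ∀ I : Ideal R, Submodule.span R {x} = I • (⊤ : Submodule R M) →
      I ^ n • (⊤ : Submodule R M) ≤ N i

/-- A proper submodule `Q` of `M` is primary if `r • m ∈ Q` and `m ∉ Q` imply
`r ∈ √(Q : M)`. -/
def IsPrimarySubmodule {R M : Type*} [CommRing R] [AddCommGroup M] [Module R M]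
    (Q : Submodule R M) : Prop :=
  Q ≠ ⊤ ∧ ∀ (r : R) (m : M), r • m ∈ Q → m ∉ Q → r ∈ (Q.colon ⊤).radical

private lemma prod_smul_fix {R M κ : Type*} [CommRing R] [AddCommGroup M] [Module R M]
    [DecidableEq κ] (s : Finset κ) (f : κ → R) (m : M) (h : ∀ j ∈ s, f j • m = m) :
    (∏ j ∈ s, f j) • m = m := by
  induction s using Finset.induction_on with
  | empty => simp
  | @insert a s hj ih =>
    rw [Finset.prod_insert hj, mul_smul, ih (fun j hjs => h j (Finset.mem_insert_of_mem hjs)),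
      h a (Finset.mem_insert_self a s)]

open DirectSum in
private lemma comp_mem_of_mem_iSup_map {R : Type*} [CommRing R]
    {ι : Type*} [DecidableEq ι] {M : ι → Type*}
    [∀ i, AddCommGroup (M i)] [∀ i, Module R (M i)]
    (N' : ∀ i, Submodule R (M i)) {x : ⨁ i, M i}
    (hx : x ∈ ⨆ i, (N' i).map (DirectSum.lof R ι M i)) (k : ι) : x k ∈ N' k := by
  refine Submodule.iSup_induction (motive := fun y : ⨁ i, M i => y k ∈ N' k) _ hx ?_ (by simp) ?_
  · rintro i y ⟨n, hn, rfl⟩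
    rcases eq_or_ne i k with rfl | hik
    · rw [lof_eq_of, of_eq_same]; exact hn
    · rw [lof_eq_of, of_eq_of_ne _ _ _ hik.symm]; exact (N' k).zero_mem
  · intro a b ha hb
    rw [DirectSum.add_apply]
    exact (N' k).add_mem ha hb


open DirectSum in
/-- `Ann(m_i) + Ann(m_j) = R` for all `i ≠ j` iff every submodule of the
direct sum `⨁ M_i` is a direct sum of submodules `N_i ≤ M_i`. -/
theorem ann_sup_eq_top_iff_submodules_directSum {R : Type*} [CommRing R]
    {ι : Type*} [DecidableEq ι] (M : ι → Type*)
    [∀ i, AddCommGroup (M i)] [∀ i, Module R (M i)] :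
    (∀ i j : ι, i ≠ j → ∀ (mi : M i) (mj : M j),
        Ideal.torsionOf R (M i) mi ⊔ Ideal.torsionOf R (M j) mj = ⊤) ↔
      (∀ N : Submodule R (⨁ i, M i), ∃ N' : ∀ i, Submodule R (M i),
        N = ⨆ i, (N' i).map (DirectSum.lof R ι M i)) := by
  classical
  constructor
  · intro h N
    refine ⟨fun i => N.comap (lof R ι M i), le_antisymm ?_ (iSup_le fun i => Submodule.map_comap_le _ _)⟩
    intro x hx
    -- key claim: each component's image is in N
    have key : ∀ i, (lof R ι M i) (x i) ∈ N := by
      intro i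
      have hb : ∀ j : ι, ∃ b : R, j ≠ i → (b • x j = 0 ∧ b • x i = x i) := by
        intro j
        rcases eq_or_ne j i with rfl | hji
        · exact ⟨1, fun hc => absurd rfl hc⟩
        · have h1 : (1 : R) ∈ Ideal.torsionOf R (M i) (x i) ⊔ Ideal.torsionOf R (M j) (x j) := by
            rw [h i j (Ne.symm hji) (x i) (x j)]; trivial
          rcases Submodule.mem_sup.mp h1 with ⟨a, ha, b, hbm, hab⟩
          rw [Ideal.mem_torsionOf_iff] at ha hbm
          refine ⟨b, fun _ => ⟨hbm, ?_⟩⟩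
          have : b = 1 - a := by rw [← hab]; ring
          rw [this, sub_smul, one_smul, ha, sub_zero]
      choose f hf using hb
      set r : R := ∏ j ∈ x.support.erase i, f j with hr
      have hrx : r • x = (lof R ι M i) (x i) := by
        refine DFinsupp.ext fun k => ?_
        rw [DirectSum.smul_apply, lof_eq_of]
        rcases eq_or_ne i k with rfl | hik
        · rw [of_eq_same]
          exact prod_smul_fix _ _ _ fun j hj => (hf j (Finset.ne_of_mem_erase hj)).2
        · rw [of_eq_of_ne _ _ _ hik.symm]
          by_cases hk : k ∈ x.support
          · have hk' : k ∈ x.support.erase i := Finset.mem_erase.mpr ⟨Ne.symm hik, hk⟩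
            rw [hr, ← Finset.prod_erase_mul _ _ hk', mul_smul,
              (hf k (Ne.symm hik)).1, smul_zero]
          · rw [DFinsupp.notMem_support_iff.mp hk, smul_zero]
      rw [← hrx]
      exact N.smul_mem r hx
    -- now decompose x as a sum of its components
    have hsum : (∑ i ∈ x.support, DirectSum.of M i (x i)) = x := DirectSum.sum_support_of x
    rw [← hsum]
    refine Submodule.sum_mem _ fun i _ => ?_
    refine Submodule.mem_iSup_of_mem i ?_
    exact ⟨x i, key i, rfl⟩
  · intro h i j hij mi mj
    set x : ⨁ k, M k := lof R ι M i mi + lof R ι M j mj with hxdef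
    obtain ⟨N', hN'⟩ := h (Submodule.span R {x})
    have hxN : x ∈ Submodule.span R {x} := Submodule.mem_span_singleton_self x
    have hxi : x i = mi := by
      rw [hxdef, DirectSum.add_apply, lof_eq_of, lof_eq_of, of_eq_same,
        of_eq_of_ne _ _ _ hij, add_zero]
    have hxj : x j = mj := by
      rw [hxdef, DirectSum.add_apply, lof_eq_of, lof_eq_of, of_eq_same,
        of_eq_of_ne _ _ _ hij.symm, zero_add]
    have hmem : (lof R ι M i) mi ∈ Submodule.span R {x} := by
      rw [hN']
      have := comp_mem_of_mem_iSup_map N' (hN' ▸ hxN) i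
      exact Submodule.mem_iSup_of_mem i ⟨x i, this, by rw [hxi]⟩
    rcases Submodule.mem_span_singleton.mp hmem with ⟨r, hrx⟩
    have hi : r • mi = mi := by
      have := congrArg (fun y : ⨁ k, M k => y i) hrx
      simpa [DirectSum.smul_apply, hxi, lof_eq_of, of_eq_same] using this
    have hj : r • mj = (0 : M j) := by
      have := congrArg (fun y : ⨁ k, M k => y j) hrx
      simpa [DirectSum.smul_apply, hxj, lof_eq_of, of_eq_of_ne _ _ _ hij.symm] using this
    rw [eq_top_iff, ← Ideal.span_singleton_one, Ideal.span_le]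
    intro y hy
    rw [Set.mem_singleton_iff.mp hy]
    have h1 : (1 : R) = (1 - r) + r := by ring
    rw [h1]
    refine Submodule.add_mem_sup ?_ ?_
    · rw [Ideal.mem_torsionOf_iff, sub_smul, one_smul, hi, sub_self]
    · rw [Ideal.mem_torsionOf_iff]; exact hj
end

section
/- Let R be a commutative ring with identity and M a zero-dimensional multiplication R-module. Then M is coprimely structured if and only if M is strongly 0-dimensional. -/
universe v

section UniverseBridge

open Submodule

/-- Auxiliary sequence used to build a countable "pair-closed" family of elements. -/
private noncomputable def pairSeq {α : Type u} (z0 : α) (f : α → α) (g : α → α → α) : ℕ → α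
  | 0 => z0
  | (k+1) =>
    if k % 2 = 0 then f (pairSeq z0 f g (k/2))
    else g (pairSeq z0 f g (Nat.unpair (k/2)).1) (pairSeq z0 f g (Nat.unpair (k/2)).2)
  decreasing_by
    · exact Nat.lt_succ_of_le (Nat.div_le_self _ _)
    · exact Nat.lt_succ_of_le ((Nat.unpair_left_le _).trans (Nat.div_le_self _ _))
    · exact Nat.lt_succ_of_le ((Nat.unpair_right_le _).trans (Nat.div_le_self _ _))

private lemma pairSeq_gen {α : Type u} (z0 : α) (f : α → α) (g : α → α → α) (n : ℕ) :
    pairSeq z0 f g (2*n+1) = f (pairSeq z0 f g n) := by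
  have h0 : 2*n+1 = (2*n)+1 := rfl
  rw [h0, pairSeq, if_pos (by omega)]
  have h1 : (2*n)/2 = n := by omega
  rw [h1]

private lemma pairSeq_pair {α : Type u} (z0 : α) (f : α → α) (g : α → α → α) (i j : ℕ) :
    pairSeq z0 f g (2*(Nat.pair i j)+2) = g (pairSeq z0 f g i) (pairSeq z0 f g j) := by
  have h0 : 2*(Nat.pair i j)+2 = (2*(Nat.pair i j)+1)+1 := by omega
  rw [h0, pairSeq, if_neg (by omega)]
  have h1 : (2*(Nat.pair i j)+1)/2 = Nat.pair i j := by omega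
  rw [h1, Nat.unpair_pair]

variable {R M : Type*} [CommRing R] [AddCommGroup M] [Module R M]

/-- In a multiplication module, a cyclic submodule equals its colon ideal smul top. -/
private lemma span_colon_smul_top (hmul : IsMultiplicationModule R M) (z : M) :
    ((Submodule.span R {z}).colon ⊤) • (⊤ : Submodule R M) = Submodule.span R {z} := by
  refine le_antisymm (Submodule.smul_le.mpr fun r hr x _ => Submodule.mem_colon.mp hr x trivial) ?_
  obtain ⟨I, hI⟩ := hmul (Submodule.span R {z})
  have hIle : I ≤ (Submodule.span R {z}).colon ⊤ := by
    intro r hr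
    exact Submodule.mem_colon.mpr fun x _ => hI ▸ Submodule.smul_mem_smul hr trivial
  calc Submodule.span R {z} = I • (⊤ : Submodule R M) := hI
    _ ≤ ((Submodule.span R {z}).colon ⊤) • (⊤ : Submodule R M) := Submodule.smul_mono_left hIle

/-- KEY LEMMA: if the canonical (universe-free) condition fails at some prime `P₀` of a
multiplication module, then there is a prime `P₁` together with an `ℕ`-indexed family of
submodules, none contained in `P₁`, whose infimum is contained in `P₁`. -/
private lemma exists_countable_failure (hmul : IsMultiplicationModule R M)
    {P₀ : Submodule R M} (hP₀ : IsPrimeSubmodule P₀)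
    (hfail : sInf {Q : Submodule R M | ¬ Q ≤ P₀} ≤ P₀) :
    ∃ P₁ : Submodule R M, IsPrimeSubmodule P₁ ∧
      ∃ c : ℕ → Submodule R M, (∀ n, ¬ c n ≤ P₁) ∧ (⨅ n, c n) ≤ P₁ := by
  classical
  -- elements outside `P₀`
  -- choice of a submodule not inside `P₀` missing a given element outside `P₀`
  have hWex : ∀ a : {x : M // x ∉ P₀}, ∃ Q : Submodule R M, ¬ Q ≤ P₀ ∧ a.1 ∉ Q := by
    intro a
    by_contra h
    push_neg at h
    exact a.2 (hfail (Submodule.mem_sInf.mpr fun Q hQ => h Q hQ))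
  choose Wsub hWle hWmem using hWex
  -- choice of an element outside `P₀` inside each such submodule
  have hfex : ∀ a : {x : M // x ∉ P₀}, ∃ b : {x : M // x ∉ P₀}, b.1 ∈ Wsub a := by
    intro a
    obtain ⟨x, hx1, hx2⟩ := SetLike.not_le_iff_exists.mp (hWle a)
    exact ⟨⟨x, hx2⟩, hx1⟩
  choose f hf using hfex
  -- the "product" step
  have hgex : ∀ a b : {x : M // x ∉ P₀}, ∃ cc : {x : M // x ∉ P₀},
      cc.1 ∈ ((Submodule.span R {a.1}).colon ⊤) • (Submodule.span R {b.1}) := by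
    intro a b
    have hnle : ¬ ((Submodule.span R {a.1}).colon ⊤) • (Submodule.span R {b.1}) ≤ P₀ := by
      intro hle
      by_cases hI : (Submodule.span R {a.1}).colon ⊤ ≤ P₀.colon ⊤
      · have h1 : ((Submodule.span R {a.1}).colon ⊤) • (⊤ : Submodule R M) ≤ P₀ :=
          Submodule.smul_le.mpr fun r hr x _ => Submodule.mem_colon.mp (hI hr) x trivial
        rw [span_colon_smul_top hmul] at h1
        exact a.2 (h1 (Submodule.mem_span_singleton_self _))
      · obtain ⟨r, hrI, hrq⟩ := SetLike.not_le_iff_exists.mp hI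
        have hrb : r • b.1 ∈ P₀ :=
          hle (Submodule.smul_mem_smul hrI (Submodule.mem_span_singleton_self _))
        rcases hP₀.2 r b.1 hrb with hb | hall
        · exact b.2 hb
        · exact hrq (Submodule.mem_colon.mpr fun x _ => hall x)
    obtain ⟨x, hx1, hx2⟩ := SetLike.not_le_iff_exists.mp hnle
    exact ⟨⟨x, hx2⟩, hx1⟩
  choose g hg using hgex
  -- a starting element outside `P₀`
  have hz0 : ∃ x : M, x ∉ P₀ := by
    by_contra h
    push_neg at h
    exact hP₀.1 (top_le_iff.mp fun x _ => h x)
  obtain ⟨x0, hx0⟩ := hz0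
  set z : ℕ → {x : M // x ∉ P₀} := pairSeq ⟨x0, hx0⟩ f g with hz
  set c : ℕ → Submodule R M := fun n => Wsub (z n) with hc
  set C : Submodule R M := ⨅ n, c n with hC
  have hzC : ∀ k, (z k).1 ∉ C := fun k h => hWmem (z k) ((iInf_le c k : C ≤ c k) h)
  -- Zorn: a maximal submodule containing `C` avoiding all elements `z k`
  set S : Set (Submodule R M) := {N | C ≤ N ∧ ∀ k, (z k).1 ∉ N} with hS
  have hCS : C ∈ S := ⟨le_rfl, hzC⟩
  obtain ⟨N₁, hCN₁, hN₁max⟩ := zorn_le_nonempty₀ S (by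
      intro ch hchS hchain y hy
      refine ⟨sSup ch, ⟨(hchS hy).1.trans (le_sSup hy), ?_⟩, fun N hN => le_sSup hN⟩
      intro k hk
      obtain ⟨N, hNch, hkN⟩ := (Submodule.mem_sSup_of_directed ⟨y, hy⟩ hchain.directedOn).1 hk
      exact (hchS hNch).2 k hkN) C hCS
  have hN₁mem : N₁ ∈ S := hN₁max.prop
  -- maximality extraction
  have hext : ∀ N' : Submodule R M, N₁ < N' → ∃ k, (z k).1 ∈ N' := by
    intro N' hlt
    by_contra h
    push_neg at h
    exact hlt.ne (le_antisymm hlt.le (hN₁max.2 ⟨hCN₁.trans hlt.le, h⟩ hlt.le))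
  -- `N₁` is prime
  have hprime : IsPrimeSubmodule N₁ := by
    constructor
    · intro h
      exact hN₁mem.2 0 (h ▸ trivial)
    · intro r m hrm
      by_cases hm : m ∈ N₁
      · exact Or.inl hm
      by_cases hall : ∀ x : M, r • x ∈ N₁
      · exact Or.inr hall
      exfalso
      push_neg at hall
      obtain ⟨x₁, hx₁⟩ := hall
      have h1 : N₁ < N₁ ⊔ Submodule.span R {m} := by
        refine lt_of_le_of_ne le_sup_left fun he => hm ?_
        exact he ▸ (le_sup_right : Submodule.span R {m} ≤ N₁ ⊔ Submodule.span R {m})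
          (Submodule.mem_span_singleton_self m)
      have h2 : N₁ < N₁ ⊔ (Ideal.span {r}) • (⊤ : Submodule R M) := by
        refine lt_of_le_of_ne le_sup_left fun he => hx₁ ?_
        exact he ▸ (le_sup_right :
          (Ideal.span {r}) • (⊤ : Submodule R M) ≤ N₁ ⊔ (Ideal.span {r}) • ⊤)
          (Submodule.smul_mem_smul (Ideal.subset_span rfl) trivial)
      obtain ⟨k₁, hk₁⟩ := hext _ h1
      obtain ⟨k₂, hk₂⟩ := hext _ h2
      set a := z k₁ with ha
      set b := z k₂ with hb
      -- key computation
      have hrm' : (Ideal.span {r}) • (Submodule.span R {m}) ≤ N₁ := by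
        refine Submodule.smul_le.mpr fun ρ hρ y hy => ?_
        obtain ⟨cc, hcc⟩ := Ideal.mem_span_singleton'.mp hρ
        obtain ⟨d, hd⟩ := Submodule.mem_span_singleton.mp hy
        have : ρ • y = cc • (d • (r • m)) := by
          rw [← hcc, ← hd, mul_smul, smul_comm r d m]
        rw [this]
        exact N₁.smul_mem cc (N₁.smul_mem d hrm)
      have haT : ((Submodule.span R {a.1}).colon ⊤) • (⊤ : Submodule R M)
          ≤ N₁ ⊔ Submodule.span R {m} := by
        rw [span_colon_smul_top hmul]
        exact Submodule.span_le.mpr (Set.singleton_subset_iff.mpr hk₁)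
      have hswap : ((Submodule.span R {a.1}).colon ⊤) • ((Ideal.span {r}) • (⊤ : Submodule R M))
          = (Ideal.span {r}) • (((Submodule.span R {a.1}).colon ⊤) • (⊤ : Submodule R M)) := by
        rw [← Submodule.smul_assoc, ← Submodule.smul_assoc, Ideal.smul_eq_mul, Ideal.smul_eq_mul,
          mul_comm]
      have hcomp : ((Submodule.span R {a.1}).colon ⊤) • (Submodule.span R {b.1}) ≤ N₁ := by
        have hbV : Submodule.span R {b.1} ≤ N₁ ⊔ (Ideal.span {r}) • (⊤ : Submodule R M) :=
          Submodule.span_le.mpr (Set.singleton_subset_iff.mpr hk₂)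
        calc ((Submodule.span R {a.1}).colon ⊤) • (Submodule.span R {b.1})
            ≤ ((Submodule.span R {a.1}).colon ⊤) •
              (N₁ ⊔ (Ideal.span {r}) • (⊤ : Submodule R M)) := smul_mono_right _ hbV
          _ = ((Submodule.span R {a.1}).colon ⊤) • N₁ ⊔
              ((Submodule.span R {a.1}).colon ⊤) • ((Ideal.span {r}) • (⊤ : Submodule R M)) :=
              Submodule.smul_sup _ _ _
          _ ≤ N₁ ⊔ (Ideal.span {r}) •
              (((Submodule.span R {a.1}).colon ⊤) • (⊤ : Submodule R M)) := by
              rw [hswap]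
              exact sup_le_sup_right Submodule.smul_le_right _
          _ ≤ N₁ ⊔ (Ideal.span {r}) • (N₁ ⊔ Submodule.span R {m}) := by
              exact sup_le_sup_left (smul_mono_right _ haT) _
          _ = N₁ ⊔ ((Ideal.span {r}) • N₁ ⊔ (Ideal.span {r}) • (Submodule.span R {m})) := by
              rw [Submodule.smul_sup]
          _ ≤ N₁ := by
              refine sup_le le_rfl (sup_le Submodule.smul_le_right hrm')
      have hgmem : (g a b).1 ∈ N₁ := hcomp (hg a b)
      have hzk : z (2*(Nat.pair k₁ k₂)+2) = g a b := pairSeq_pair _ _ _ _ _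
      exact hN₁mem.2 (2*(Nat.pair k₁ k₂)+2) (by rw [hzk]; exact hgmem)
  refine ⟨N₁, hprime, c, ?_, ?_⟩
  · intro n hle
    have hz1 : z (2*n+1) = f (z n) := pairSeq_gen _ _ _ _
    have : (z (2*n+1)).1 ∈ c n := by rw [hz1]; exact hf (z n)
    exact hN₁mem.2 (2*n+1) (hle this)
  · exact hCN₁

end UniverseBridge

/-- A zero-dimensional multiplication module is coprimely structured iff
it is strongly 0-dimensional. -/
theorem coprimelyStructured_iff_stronglyZeroDimensional_of_mul {R M : Type*} [CommRing R]
    [AddCommGroup M] [Module R M] (hmul : IsMultiplicationModule R M)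
    (hzd : ZeroDimensionalModule R M) :
    CoprimelyStructured R M ↔ StronglyZeroDimensional R M := by
  classical
  by_cases hgood : ∀ P : Submodule R M, IsPrimeSubmodule P →
      ¬ sInf {Q : Submodule R M | ¬ Q ≤ P} ≤ P
  · -- the canonical universe-free condition holds: both sides are true
    constructor
    · intro _ P hP ι N hinf
      by_contra h
      push_neg at h
      exact hgood P hP (le_trans (le_iInf fun j => sInf_le (h j)) hinf)
    · intro _ P hP ι N hsup hinf
      refine hgood P hP (le_trans (le_iInf fun i => sInf_le ?_) hinf)
      intro hle
      exact hP.1 ((hsup i).symm.trans (sup_eq_right.mpr hle)).symm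
  · -- the canonical condition fails: both sides are false
    push_neg at hgood
    obtain ⟨P₀, hP₀, hfail⟩ := hgood
    obtain ⟨P₁, hP₁, c, hcP, hinfc⟩ := exists_countable_failure hmul hP₀ hfail
    have hsup : ∀ n, c n ⊔ P₁ = ⊤ := fun n =>
      (hzd P₁ hP₁).2 _ (lt_of_le_of_ne le_sup_right fun he => hcP n (he ▸ le_sup_left))
    constructor
    · intro hcs
      exfalso
      refine (hcs P₁ hP₁ (ULift ℕ) (fun i => c i.down) (fun i => hsup i.down)) ?_
      exact le_trans (le_iInf fun n => iInf_le (fun i : ULift ℕ => c i.down) (ULift.up n)) hinfc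
    · intro hsd
      exfalso
      have hinf' : (⨅ i : ULift ℕ, c i.down) ≤ P₁ :=
        le_trans (le_iInf fun n => iInf_le (fun i : ULift ℕ => c i.down) (ULift.up n)) hinfc
      obtain ⟨j, hj⟩ := hsd P₁ hP₁ (ULift ℕ) (fun i => c i.down) hinf'
      exact hcP j.down hj
end

section
/- Let R be a commutative ring with identity and M a multiplication R-module. A family {N_i}_{i∈I} of submodules of M satisfies property (*) if and only if for every subset J ⊆ I, rad(⋂_{i∈J} N_i) = ⋂_{i∈J} rad(N_i). -/
universe v

section Aux

variable {R M : Type*} [CommRing R] [AddCommGroup M] [Module R M]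

private lemma mulSmul (I J : Ideal R) (N : Submodule R M) :
    (I * J) • N = I • (J • N) := by
  rw [← Ideal.smul_eq_mul, Submodule.smul_assoc]

private lemma fgSmulSpan {J : Ideal R} (hJ : J.FG) (x : M) :
    (J • Submodule.span R {x}).FG := by
  obtain ⟨s, hs⟩ := hJ
  rw [← hs, Submodule.span_smul_span]
  rw [Submodule.fg_def]
  refine ⟨_, ?_, rfl⟩
  exact s.finite_toSet.smul (Set.finite_singleton x)

private lemma existsFgRep (hmul : IsMultiplicationModule R M) (x : M) :
    ∃ I₀ : Ideal R, I₀.FG ∧ Submodule.span R {x} = I₀ • (⊤ : Submodule R M) := by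
  obtain ⟨I, hI⟩ := hmul (Submodule.span R {x})
  have hx : x ∈ I • (⊤ : Submodule R M) := hI ▸ Submodule.mem_span_singleton_self x
  have h : ∃ I₀ : Ideal R, I₀ ≤ I ∧ I₀.FG ∧ x ∈ I₀ • (⊤ : Submodule R M) := by
    refine Submodule.smul_induction_on hx ?_ ?_
    · intro r hr m _
      exact ⟨Ideal.span {r}, by rwa [Ideal.span_le, Set.singleton_subset_iff],
        ⟨{r}, by simp⟩,
        Submodule.smul_mem_smul (Submodule.mem_span_singleton_self r) trivial⟩
    · rintro y z ⟨A, hA, hAfg, hy⟩ ⟨B, hB, hBfg, hz⟩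
      exact ⟨A ⊔ B, sup_le hA hB, Submodule.FG.sup hAfg hBfg,
        Submodule.add_mem _ (Submodule.smul_mono_left le_sup_left hy)
          (Submodule.smul_mono_left le_sup_right hz)⟩
  obtain ⟨I₀, hle, hfg, hmem⟩ := h
  refine ⟨I₀, hfg, le_antisymm ?_ ?_⟩
  · rwa [Submodule.span_le, Set.singleton_subset_iff]
  · exact (Submodule.smul_mono_left hle).trans hI.symm.le

private lemma powEq {x : M} {I I₀ : Ideal R}
    (hI : Submodule.span R {x} = I • (⊤ : Submodule R M))
    (hI₀ : Submodule.span R {x} = I₀ • (⊤ : Submodule R M)) (n : ℕ) :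
    I ^ (n + 1) • (⊤ : Submodule R M) = I₀ ^ (n + 1) • (⊤ : Submodule R M) := by
  induction n with
  | zero => rw [pow_one, pow_one, ← hI, ← hI₀]
  | succ n ih =>
      calc I ^ (n + 1 + 1) • (⊤ : Submodule R M)
          = I • (I ^ (n + 1) • ⊤) := by
            rw [← mulSmul, mul_comm I (I ^ (n + 1)), ← pow_succ]
        _ = I • (I₀ ^ (n + 1) • ⊤) := by rw [ih]
        _ = I₀ ^ (n + 1) • (I • ⊤) := by
            rw [← mulSmul, mul_comm I (I₀ ^ (n + 1)), mulSmul]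
        _ = I₀ ^ (n + 1) • (I₀ • ⊤) := by rw [← hI, hI₀]
        _ = I₀ ^ (n + 1 + 1) • (⊤ : Submodule R M) := by
            rw [← mulSmul, ← pow_succ]

private lemma primeSmul {P : Submodule R M} (hP : IsPrimeSubmodule P)
    {A : Ideal R} {N : Submodule R M} (h : A • N ≤ P) :
    N ≤ P ∨ A • (⊤ : Submodule R M) ≤ P := by
  by_cases hN : N ≤ P
  · exact Or.inl hN
  right
  obtain ⟨m, hm, hmP⟩ := SetLike.not_le_iff_exists.mp hN
  rw [Submodule.smul_le]
  intro r hr y _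
  rcases hP.2 r m (h (Submodule.smul_mem_smul hr hm)) with h1 | h2
  · exact absurd h1 hmP
  · exact h2 y

private lemma primePow {P : Submodule R M} (hP : IsPrimeSubmodule P)
    {A : Ideal R} : ∀ k : ℕ, A ^ k • (⊤ : Submodule R M) ≤ P →
      A • (⊤ : Submodule R M) ≤ P := by
  intro k
  induction k with
  | zero =>
      intro h
      rw [pow_zero, Ideal.one_eq_top, Submodule.top_smul] at h
      exact absurd (top_le_iff.mp h) hP.1
  | succ k ih =>
      intro h
      rw [pow_succ, mul_comm, mulSmul] at h
      rcases primeSmul hP h with h1 | h2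
      · exact ih h1
      · exact h2

end Aux

section Zorn

variable {R M : Type*} [CommRing R] [AddCommGroup M] [Module R M]

private lemma zornPrime {x : M} {I₀ : Ideal R} (hfg : I₀.FG)
    (hx : Submodule.span R {x} = I₀ • (⊤ : Submodule R M)) {K : Submodule R M}
    (hK : ∀ n : ℕ, ¬ (I₀ ^ n • Submodule.span R {x} ≤ K)) :
    ∃ P : Submodule R M, IsPrimeSubmodule P ∧ K ≤ P ∧ x ∉ P := by
  set S : Set (Submodule R M) :=
    {N | K ≤ N ∧ ∀ n : ℕ, ¬ (I₀ ^ n • Submodule.span R {x} ≤ N)} with hS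
  have hub : ∀ c ⊆ S, IsChain (· ≤ ·) c → ∀ y ∈ c, ∃ ub ∈ S, ∀ z ∈ c, z ≤ ub := by
    intro c hcS hchain y hy
    refine ⟨sSup c, ⟨(hcS hy).1.trans (le_sSup hy), ?_⟩, fun z hz => le_sSup hz⟩
    intro n hle
    have hcompact : IsCompactElement (I₀ ^ n • Submodule.span R {x}) :=
      (Submodule.fg_iff_compact _).mp (fgSmulSpan (Submodule.FG.pow hfg n) x)
    rw [CompleteLattice.isCompactElement_iff_le_of_directed_sSup_le] at hcompact
    obtain ⟨z, hzc, hlez⟩ := hcompact c ⟨y, hy⟩ hchain.directedOn hle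
    exact (hcS hzc).2 n hlez
  obtain ⟨P, hKP, hPmem, hmax⟩ :
      ∃ P, K ≤ P ∧ P ∈ S ∧ ∀ ⦃z⦄, z ∈ S → P ≤ z → z ≤ P := by
    obtain ⟨P, hKP, hmax⟩ := zorn_le_nonempty₀ S hub K ⟨le_rfl, hK⟩
    exact ⟨P, hKP, hmax.1, fun z hz hPz => hmax.2 hz hPz⟩
  have hxP : x ∉ P := by
    intro hxP
    exact hPmem.2 0 (by
      rw [pow_zero, Ideal.one_eq_top, Submodule.top_smul, Submodule.span_le,
        Set.singleton_subset_iff]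
      exact hxP)
  refine ⟨P, ⟨fun hPt => hxP (hPt ▸ Submodule.mem_top), ?_⟩, hKP, hxP⟩
  intro r m hrm
  by_cases hmP : m ∈ P
  · exact Or.inl hmP
  right
  by_contra hry
  push_neg at hry
  obtain ⟨y, hry⟩ := hry
  -- maximality at P ⊔ span {m}
  obtain ⟨n₁, hn₁⟩ : ∃ n, I₀ ^ n • Submodule.span R {x} ≤ P ⊔ Submodule.span R {m} := by
    by_contra hcon
    push_neg at hcon
    have hmle : P ⊔ Submodule.span R {m} ≤ P :=
      hmax ⟨hKP.trans le_sup_left, hcon⟩ le_sup_left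
    exact hmP (hmle (le_sup_right (a := P) (Submodule.mem_span_singleton_self m)))
  -- maximality at P ⊔ span{r} • ⊤
  obtain ⟨n₂, hn₂⟩ : ∃ n, I₀ ^ n • Submodule.span R {x} ≤
      P ⊔ Ideal.span {r} • (⊤ : Submodule R M) := by
    by_contra hcon
    push_neg at hcon
    have hmle : P ⊔ Ideal.span {r} • (⊤ : Submodule R M) ≤ P :=
      hmax ⟨hKP.trans le_sup_left, hcon⟩ le_sup_left
    exact hry (hmle (le_sup_right (a := P)
      (Submodule.smul_mem_smul (Submodule.mem_span_singleton_self r) Submodule.mem_top)))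
  -- step 1 : span{r} • (I₀ ^ n₁ • span {x}) ≤ P
  have step1 : Ideal.span {r} • (I₀ ^ n₁ • Submodule.span R {x}) ≤ P := by
    rw [Submodule.smul_le]
    intro c hc t ht
    obtain ⟨u, rfl⟩ := Ideal.mem_span_singleton'.mp hc
    obtain ⟨p, hp, q, hq, rfl⟩ := Submodule.mem_sup.mp (hn₁ ht)
    obtain ⟨s, rfl⟩ := Submodule.mem_span_singleton.mp hq
    rw [smul_add]
    refine P.add_mem (P.smul_mem _ hp) ?_
    have : (u * r) • (s • m) = (u * s) • (r • m) := by
      rw [mul_smul, mul_smul, smul_comm r s]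
    rw [this]
    exact P.smul_mem _ hrm
  -- final computation
  have key : I₀ ^ (n₁ + 1 + n₂) • Submodule.span R {x} ≤ P := by
    have e1 : I₀ ^ (n₁ + 1 + n₂) • Submodule.span R {x}
        = I₀ ^ (n₁ + 1) • (I₀ ^ n₂ • Submodule.span R {x}) := by
      rw [← mulSmul, ← pow_add]
    rw [e1]
    calc I₀ ^ (n₁ + 1) • (I₀ ^ n₂ • Submodule.span R {x})
        ≤ I₀ ^ (n₁ + 1) • (P ⊔ Ideal.span {r} • (⊤ : Submodule R M)) :=
          smul_mono_right _ hn₂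
      _ = I₀ ^ (n₁ + 1) • P ⊔ I₀ ^ (n₁ + 1) • (Ideal.span {r} • (⊤ : Submodule R M)) :=
          Submodule.smul_sup _ _ _
      _ ≤ P ⊔ Ideal.span {r} • (I₀ ^ (n₁ + 1) • (⊤ : Submodule R M)) := by
          refine sup_le_sup Submodule.smul_le_right (le_of_eq ?_)
          rw [← mulSmul, mul_comm, mulSmul]
      _ = P ⊔ Ideal.span {r} • (I₀ ^ n₁ • Submodule.span R {x}) := by
          rw [pow_succ, mulSmul, ← hx]
      _ ≤ P ⊔ P := sup_le_sup le_rfl step1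
      _ = P := sup_idem P
  exact hPmem.2 _ key

end Zorn

section Main

variable {R M : Type*} [CommRing R] [AddCommGroup M] [Module R M]

private lemma radPow {x : M} {K : Submodule R M} {I₀ : Ideal R} (hfg : I₀.FG)
    (hx : Submodule.span R {x} = I₀ • (⊤ : Submodule R M))
    (hrad : x ∈ submoduleRad K) :
    ∃ n : ℕ, I₀ ^ (n + 1) • (⊤ : Submodule R M) ≤ K := by
  by_contra h
  push_neg at h
  have hK : ∀ n : ℕ, ¬ (I₀ ^ n • Submodule.span R {x} ≤ K) := by
    intro n hle
    refine h n ?_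
    have e : I₀ ^ (n + 1) • (⊤ : Submodule R M) = I₀ ^ n • Submodule.span R {x} := by
      rw [pow_succ, mulSmul, ← hx]
    rwa [e]
  obtain ⟨P, hP, hKP, hxP⟩ := zornPrime hfg hx hK
  exact hxP (Submodule.mem_sInf.mp hrad P ⟨hP, hKP⟩)


end Main

/-- A family of submodules of a multiplication module satisfies
property (*) iff for every subfamily the radical of the intersection equals the
intersection of the radicals. -/
theorem satisfiesStar_iff_rad_iInf {R M : Type*} [CommRing R]
    [AddCommGroup M] [Module R M] (hmul : IsMultiplicationModule R M)
    {ι : Type*} (N : ι → Submodule R M) :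
    SatisfiesStar N ↔
      ∀ J : Set ι, submoduleRad (⨅ i ∈ J, N i) = ⨅ i ∈ J, submoduleRad (N i) := by
  constructor
  · intro hstar J
    apply le_antisymm
    · exact le_iInf₂ fun i hi =>
        sInf_le_sInf fun P hP => ⟨hP.1, (iInf₂_le i hi).trans hP.2⟩
    · intro x hx
      have hx' : ∀ i ∈ J, x ∈ submoduleRad (N i) := by
        simpa [Submodule.mem_iInf] using hx
      obtain ⟨I₀, hfg, hx0⟩ := existsFgRep hmul x
      obtain ⟨n, hn⟩ := hstar x
      have hKle : I₀ ^ n • (⊤ : Submodule R M) ≤ ⨅ i ∈ J, N i :=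
        le_iInf₂ fun i hi => hn i (hx' i hi) I₀ hx0
      refine Submodule.mem_sInf.mpr ?_
      rintro P ⟨hP, hKP⟩
      have hle : I₀ • (⊤ : Submodule R M) ≤ P := primePow hP n (hKle.trans hKP)
      exact hle (hx0 ▸ Submodule.mem_span_singleton_self x)
  · intro h x
    obtain ⟨I₀, hfg, hx0⟩ := existsFgRep hmul x
    have hxJ : x ∈ ⨅ i ∈ {i | x ∈ submoduleRad (N i)}, submoduleRad (N i) := by
      simp only [Submodule.mem_iInf]
      exact fun i hi => hi
    have hrad : x ∈ submoduleRad (⨅ i ∈ {i | x ∈ submoduleRad (N i)}, N i) := by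
      rw [h {i | x ∈ submoduleRad (N i)}]
      exact hxJ
    obtain ⟨n, hn⟩ := radPow hfg hx0 hrad
    refine ⟨n + 1, fun i hi I hI => ?_⟩
    rw [powEq hI hx0 n]
    exact hn.trans (iInf₂_le i hi)
end

section
/- Let R be a commutative ring with identity and M a multiplication R-module such that every family of submodules of M satisfies property (*). If for every family {P_i}_{i∈I} of prime submodules of M and every maximal submodule K of M the inclusion ⋂_{i∈I} P_i ⊆ K implies P_j ⊆ K for some j ∈ I, then M is coprimely structured. -/
universe v

section CS
variable {R M : Type*} [CommRing R] [AddCommGroup M] [Module R M]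

/-- elements of `I • span {x}` have the form `e • x` with `e ∈ I`. -/
lemma cs_smul_span_singleton {I : Ideal R} {x w : M} (hw : w ∈ I • (Submodule.span R {x})) :
    ∃ e ∈ I, w = e • x := by
  refine Submodule.smul_induction_on hw ?_ ?_
  · intro r hr n hn
    rcases Submodule.mem_span_singleton.mp hn with ⟨s, rfl⟩
    exact ⟨r * s, I.mul_mem_right s hr, (mul_smul r s x).symm⟩
  · rintro y z ⟨e, he, rfl⟩ ⟨f, hf, rfl⟩
    exact ⟨e + f, I.add_mem he hf, (add_smul e f x).symm⟩

/-- elements of `span{a} • N` have the form `a • z` with `z ∈ N`. -/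
lemma cs_span_singleton_smul {a : R} {N : Submodule R M} {w : M}
    (hw : w ∈ (Ideal.span {a} : Ideal R) • N) : ∃ z ∈ N, w = a • z := by
  refine Submodule.smul_induction_on hw ?_ ?_
  · intro r hr n hn
    rcases Ideal.mem_span_singleton.mp hr with ⟨c, rfl⟩
    exact ⟨c • n, N.smul_mem c hn, mul_smul a c n⟩
  · rintro y z ⟨e, he, rfl⟩ ⟨f, hf, rfl⟩
    exact ⟨e + f, N.add_mem he hf, (smul_add a e f).symm⟩

lemma cs_le_colon_smul (I : Ideal R) (N : Submodule R M) (h : I • (⊤ : Submodule R M) ≤ N) :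
    I ≤ N.colon ⊤ := by
  intro a ha
  rw [Submodule.mem_colon]
  intro p _
  exact h (Submodule.smul_mem_smul ha trivial)

lemma cs_colon_smul_le (N : Submodule R M) : (N.colon ⊤) • (⊤ : Submodule R M) ≤ N := by
  refine Submodule.smul_le.mpr ?_
  intro r hr n hn
  exact Submodule.mem_colon.mp hr n trivial

/-- L1: in a multiplication module `(N : M) • M = N`. -/
lemma cs_colon_smul_eq (hmul : IsMultiplicationModule R M) (N : Submodule R M) :
    (N.colon ⊤) • (⊤ : Submodule R M) = N := by
  rcases hmul N with ⟨I, rfl⟩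
  exact le_antisymm (cs_colon_smul_le _)
    (Submodule.smul_mono_left (cs_le_colon_smul I _ le_rfl))

/-- L2 -/
lemma cs_le_iff_colon_le (hmul : IsMultiplicationModule R M) {N N' : Submodule R M} :
    N ≤ N' ↔ N.colon ⊤ ≤ N'.colon ⊤ := by
  constructor
  · intro h a ha
    rw [Submodule.mem_colon] at ha ⊢
    exact fun p hp => h (ha p hp)
  · intro h
    calc N = (N.colon ⊤) • ⊤ := (cs_colon_smul_eq hmul N).symm
    _ ≤ (N'.colon ⊤) • ⊤ := Submodule.smul_mono_left h
    _ = N' := cs_colon_smul_eq hmul N'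

/-- L3: coatoms are prime. -/
lemma cs_coatom_prime {K : Submodule R M} (hK : IsCoatom K) : IsPrimeSubmodule K := by
  refine ⟨hK.1, ?_⟩
  intro r m hrm
  by_cases hm : m ∈ K
  · exact Or.inl hm
  · refine Or.inr fun x => ?_
    have htop : K ⊔ Submodule.span R {m} = ⊤ := by
      refine hK.2 _ (lt_of_le_of_ne le_sup_left ?_)
      intro h
      exact hm (h ▸ (le_sup_right : Submodule.span R {m} ≤ K ⊔ Submodule.span R {m})
        (Submodule.mem_span_singleton_self m))
    have hx : x ∈ K ⊔ Submodule.span R {m} := htop ▸ Submodule.mem_top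
    rcases Submodule.mem_sup.mp hx with ⟨y, hy, z, hz, rfl⟩
    rcases Submodule.mem_span_singleton.mp hz with ⟨s, rfl⟩
    have : r • (s • m) = s • (r • m) := smul_comm r s m
    rw [smul_add, this]
    exact K.add_mem (K.smul_mem r hy) (K.smul_mem s hrm)

/-- L4: the colon ideal of a prime submodule is prime. -/
lemma cs_colon_isPrime {P : Submodule R M} (hP : IsPrimeSubmodule P) :
    (P.colon ⊤).IsPrime := by
  constructor
  · intro h
    have : (1 : R) ∈ P.colon ⊤ := h ▸ Submodule.mem_top
    apply hP.1
    refine top_unique fun x _ => ?_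
    simpa using Submodule.mem_colon.mp this x trivial
  · intro a b hab
    by_cases hb : b ∈ P.colon ⊤
    · exact Or.inr hb
    · left
      rw [Submodule.mem_colon] at hb
      push_neg at hb
      rcases hb with ⟨m, _, hm⟩
      have habm : a • (b • m) ∈ P := by
        have := Submodule.mem_colon.mp hab m trivial
        rwa [mul_smul] at this
      rcases hP.2 a (b • m) habm with h | h
      · exact absurd h hm
      · rw [Submodule.mem_colon]; exact fun p _ => h p

/-- prime-submodule splitting in the convenient form. -/
lemma cs_prime_smul_mem {P : Submodule R M} (hP : IsPrimeSubmodule P) {r : R} {m : M}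
    (h : r • m ∈ P) (hr : r ∉ P.colon ⊤) : m ∈ P := by
  rcases hP.2 r m h with h' | h'
  · exact h'
  · exact absurd (Submodule.mem_colon.mpr fun p _ => h' p) hr

/-- ideal powers below primes. -/
lemma cs_pow_le_prime {p : Ideal R} (hp : p.IsPrime) {I : Ideal R} {n : ℕ}
    (h : I ^ n ≤ p) : I ≤ p := by
  induction n with
  | zero => exact absurd (top_le_iff.mp (by simpa using h)) hp.ne_top
  | succ k ih =>
    rcases (hp.mul_le).mp (by rwa [pow_succ] at h) with h' | h'
    · exact ih h'
    · exact h'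

/-- L5 -/
lemma cs_pow_smul_le_prime (hmul : IsMultiplicationModule R M) {P : Submodule R M}
    (hP : IsPrimeSubmodule P) {I : Ideal R} {n : ℕ}
    (h : (I ^ n) • (⊤ : Submodule R M) ≤ P) : I • (⊤ : Submodule R M) ≤ P := by
  have h1 : I ^ n ≤ P.colon ⊤ := le_trans (cs_le_colon_smul _ _ le_rfl)
    ((cs_le_iff_colon_le hmul).mp h)
  have h2 : I ≤ P.colon ⊤ := cs_pow_le_prime (cs_colon_isPrime hP) h1
  calc I • (⊤ : Submodule R M) ≤ (P.colon ⊤) • ⊤ := Submodule.smul_mono_left h2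
  _ = P := cs_colon_smul_eq hmul P

end CS


section CS2
variable {R M : Type*} [CommRing R] [AddCommGroup M] [Module R M]

lemma cs_coatom_sup_span {K : Submodule R M} (hK : IsCoatom K) {η : M} (hη : η ∉ K) :
    K ⊔ Submodule.span R {η} = ⊤ := by
  refine hK.2 _ (lt_of_le_of_ne le_sup_left ?_)
  intro h
  exact hη (h ▸ Submodule.mem_sup_right (Submodule.mem_span_singleton_self η))

lemma cs_exists_notMem {N : Submodule R M} (hN : N ≠ ⊤) : ∃ x, x ∉ N := by
  by_contra hc; push_neg at hc; exact hN (top_unique fun x _ => hc x)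

lemma cs_smul_comm' (I J : Ideal R) (N : Submodule R M) : I • (J • N) = J • (I • N) := by
  rw [← mul_smul, mul_comm, mul_smul]

/-- EBS : every proper submodule of a multiplication module lies under a coatom. -/
lemma cs_exists_coatom (hmul : IsMultiplicationModule R M) {N : Submodule R M} (hN : N ≠ ⊤) :
    ∃ K : Submodule R M, IsCoatom K ∧ N ≤ K := by
  have hcN : N.colon ⊤ ≠ ⊤ := by
    intro h
    apply hN
    rw [← cs_colon_smul_eq hmul N, h, Submodule.top_smul]
  -- key : some maximal ideal above the colon has proper smul
  have key : ∃ m : Ideal R, m.IsMaximal ∧ N.colon ⊤ ≤ m ∧ m • (⊤ : Submodule R M) ≠ ⊤ := by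
    by_contra hcon
    push_neg at hcon
    obtain ⟨x₀, hx₀⟩ := cs_exists_notMem hN
    set A : Ideal R := N.colon ⊤ ⊔ (Submodule.span R {x₀}).annihilator with hA
    have hAne : A ≠ ⊤ := by
      intro htop
      have h1 : (1 : R) ∈ A := htop ▸ Submodule.mem_top
      rcases Submodule.mem_sup.mp h1 with ⟨c, hc, t, ht, hct⟩
      have htx : t • x₀ = 0 :=
        Submodule.mem_annihilator.mp ht x₀ (Submodule.mem_span_singleton_self x₀)
      have : x₀ = c • x₀ := by
        have : (c + t) • x₀ = x₀ := by rw [hct, one_smul]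
        rw [add_smul, htx, add_zero] at this
        exact this.symm
      exact hx₀ (this ▸ Submodule.mem_colon.mp hc x₀ trivial)
    obtain ⟨m₀, hm₀, hAm₀⟩ := Ideal.exists_le_maximal A hAne
    have hm₀top : m₀ • (⊤ : Submodule R M) = ⊤ :=
      hcon m₀ hm₀ (le_trans le_sup_left hAm₀)
    obtain ⟨Ix, hIx⟩ := hmul (Submodule.span R {x₀})
    have hspan : Submodule.span R {x₀} = m₀ • Submodule.span R {x₀} := by
      conv_lhs => rw [hIx, ← hm₀top, cs_smul_comm', ← hIx]
    have hx₀mem : x₀ ∈ m₀ • Submodule.span R {x₀} :=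
      hspan ▸ Submodule.mem_span_singleton_self x₀
    obtain ⟨q, hq, hqx⟩ := cs_smul_span_singleton hx₀mem
    have h1q : (1 - q) ∈ (Submodule.span R {x₀}).annihilator := by
      rw [Submodule.mem_annihilator]
      intro z hz
      rcases Submodule.mem_span_singleton.mp hz with ⟨s, rfl⟩
      rw [smul_comm, sub_smul, one_smul, ← hqx, sub_self, smul_zero]
    have : (1 : R) ∈ m₀ := by
      have h1 : (1 - q) + q = 1 := by ring
      exact h1 ▸ m₀.add_mem (hAm₀ (Submodule.mem_sup_right h1q)) hq
    exact hm₀.ne_top (Ideal.eq_top_iff_one m₀ |>.mpr this)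
  obtain ⟨m, hm, hcNm, hmtop⟩ := key
  refine ⟨m • ⊤, ⟨hmtop, ?_⟩, ?_⟩
  · intro L hL
    by_contra hLtop
    have hcL : L.colon ⊤ ≠ ⊤ := by
      intro h
      apply hLtop
      rw [← cs_colon_smul_eq hmul L, h, Submodule.top_smul]
    have hmcL : m ≤ L.colon ⊤ := by
      have h1 : m ≤ (m • (⊤ : Submodule R M)).colon ⊤ := cs_le_colon_smul m _ le_rfl
      exact le_trans h1 ((cs_le_iff_colon_le hmul).mp hL.le)
    have : m = L.colon ⊤ := hm.eq_of_le hcL hmcL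
    apply hL.ne
    rw [← cs_colon_smul_eq hmul L, ← this]
  · calc N = (N.colon ⊤) • ⊤ := (cs_colon_smul_eq hmul N).symm
    _ ≤ m • ⊤ := Submodule.smul_mono_left hcNm

/-- Lemma B : a prime submodule below a coatom equals it. -/
lemma cs_prime_eq_coatom (hmul : IsMultiplicationModule R M)
    (hstarN : ∀ g : ℕ → Submodule R M, SatisfiesStar g)
    {P K : Submodule R M} (hP : IsPrimeSubmodule P) (hK : IsCoatom K) (hle : P ≤ K) :
    P = K := by
  by_contra hne
  have hpk : P.colon ⊤ ≤ K.colon ⊤ := (cs_le_iff_colon_le hmul).mp hle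
  have hnk : ¬ K.colon ⊤ ≤ P.colon ⊤ := by
    intro h
    exact hne (le_antisymm hle ((cs_le_iff_colon_le hmul).mpr h))
  obtain ⟨a, hak, hap⟩ := SetLike.not_le_iff_exists.mp hnk
  obtain ⟨η, hη⟩ := cs_exists_notMem hK.1
  have hηP : η ∉ P := fun h => hη (hle h)
  obtain ⟨Iη, hIη⟩ := hmul (Submodule.span R {η})
  have hpprime : (P.colon ⊤).IsPrime := cs_colon_isPrime hP
  -- coprimality of K.colon and Iη
  have hcop : K.colon ⊤ ⊔ Iη = ⊤ := by
    have htop : K ⊔ Submodule.span R {η} = ⊤ := cs_coatom_sup_span hK hη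
    have htop' : ((K.colon ⊤ ⊔ Iη) : Ideal R) • (⊤ : Submodule R M) = ⊤ := by
      rw [Submodule.sup_smul, cs_colon_smul_eq hmul K, ← hIη, htop]
    have hspan : Submodule.span R {η} = (K.colon ⊤ ⊔ Iη) • Submodule.span R {η} := by
      conv_lhs => rw [hIη, ← htop', cs_smul_comm', ← hIη]
    have hmem : η ∈ (K.colon ⊤ ⊔ Iη) • Submodule.span R {η} :=
      hspan ▸ Submodule.mem_span_singleton_self η
    obtain ⟨e, he, heq⟩ := cs_smul_span_singleton hmem
    have h0 : (1 - e) • η ∈ P := by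
      rw [sub_smul, one_smul, ← heq, sub_self]
      exact P.zero_mem
    rcases hP.2 (1 - e) η h0 with h | h
    · exact absurd h hηP
    · have h1e : (1 - e) ∈ K.colon ⊤ ⊔ Iη :=
        Submodule.mem_sup_left (hpk (Submodule.mem_colon.mpr fun p _ => h p))
      rw [Ideal.eq_top_iff_one]
      have : (1 - e) + e = 1 := by ring
      exact this ▸ Submodule.add_mem _ h1e he
  -- star application
  set V : ℕ → Submodule R M :=
    fun j => ((P.colon ⊤ ⊔ Ideal.span {a ^ (j + 1)}) : Ideal R) • (⊤ : Submodule R M) with hV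
  obtain ⟨n, hn⟩ := hstarN V (a • η)
  have hrad : ∀ j, a • η ∈ submoduleRad (V j) := by
    intro j
    refine Submodule.mem_sInf.mpr ?_
    rintro Q ⟨hQprime, hVQ⟩
    have hpow : a ^ (j + 1) ∈ Q.colon ⊤ := by
      have h1 : (Ideal.span {a ^ (j + 1)} : Ideal R) • (⊤ : Submodule R M) ≤ Q :=
        le_trans (Submodule.smul_mono_left le_sup_right) hVQ
      exact cs_le_colon_smul _ _ h1 (Submodule.mem_span_singleton_self _)
    have ha : a ∈ Q.colon ⊤ := (cs_colon_isPrime hQprime).mem_of_pow_mem (j + 1) hpow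
    exact Submodule.mem_colon.mp ha η trivial
  have hI : Submodule.span R {a • η} = ((Ideal.span {a} * Iη) : Ideal R) • (⊤ : Submodule R M) := by
    rw [mul_smul, ← hIη]
    refine le_antisymm ?_ ?_
    · rw [Submodule.span_le, Set.singleton_subset_iff]
      exact Submodule.smul_mem_smul (Submodule.mem_span_singleton_self a)
        (Submodule.mem_span_singleton_self η)
    · refine Submodule.smul_le.mpr ?_
      intro r hr z hz
      rcases Ideal.mem_span_singleton.mp hr with ⟨c, rfl⟩
      rcases Submodule.mem_span_singleton.mp hz with ⟨s, rfl⟩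
      refine Submodule.mem_span_singleton.mpr ⟨c * s, ?_⟩
      rw [smul_smul, smul_smul]
      congr 1
      ring
  have hVn := hn n (hrad n) _ hI
  -- Iη^n • ⊤ ≤ K
  have hKey : (Iη ^ n) • (⊤ : Submodule R M) ≤ K := by
    intro z hz
    have hmemz : a ^ n • z ∈ ((Ideal.span {a} * Iη) ^ n : Ideal R) • (⊤ : Submodule R M) := by
      rw [mul_pow, Ideal.span_singleton_pow, mul_smul]
      exact Submodule.smul_mem_smul (Submodule.mem_span_singleton_self _) hz
    have hVmem : a ^ n • z ∈ V n := hVn hmemz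
    rw [hV] at hVmem
    simp only [Submodule.sup_smul] at hVmem
    rcases Submodule.mem_sup.mp hVmem with ⟨π, hπ, w, hw, heq⟩
    obtain ⟨w', _, rfl⟩ := cs_span_singleton_smul hw
    have hπP : π ∈ P := cs_colon_smul_le P hπ
    have hsub : a ^ n • (z - a • w') ∈ P := by
      have : a ^ n • (z - a • w') = π := by
        rw [smul_sub, ← heq]
        have : a ^ n • a • w' = a ^ (n + 1) • w' := by
          rw [smul_smul, ← pow_succ]
        rw [this, add_sub_cancel_right]
      rw [this]; exact hπP
    have hanp : a ^ n ∉ P.colon ⊤ := fun h => hap (hpprime.mem_of_pow_mem n h)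
    have hzP : z - a • w' ∈ P := cs_prime_smul_mem hP hsub hanp
    have haw : a • w' ∈ K := Submodule.mem_colon.mp hak w' trivial
    have : (z - a • w') + a • w' = z := sub_add_cancel z (a • w')
    exact this ▸ K.add_mem (hle hzP) haw
  -- finish
  have hsup : (K.colon ⊤ ⊔ Iη ^ n : Ideal R) = ⊤ := by
    by_contra hne'
    obtain ⟨m', hm', hlem'⟩ := Ideal.exists_le_maximal _ hne'
    have h1 : Iη ≤ m' := cs_pow_le_prime hm'.isPrime (le_trans le_sup_right hlem')
    have h2 : K.colon ⊤ ≤ m' := le_trans le_sup_left hlem'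
    have : (⊤ : Ideal R) ≤ m' := hcop ▸ sup_le h2 h1
    exact hm'.ne_top (top_unique this)
  apply hK.1
  refine top_unique ?_
  have : (⊤ : Submodule R M) = (K.colon ⊤ ⊔ Iη ^ n : Ideal R) • (⊤ : Submodule R M) := by
    rw [hsup, Submodule.top_smul]
  rw [this, Submodule.sup_smul, cs_colon_smul_eq hmul K]
  exact sup_le le_rfl hKey

end CS2


section CS3
variable {R M : Type*} [CommRing R] [AddCommGroup M] [Module R M]

lemma cs_mem_colon_span {N : Submodule R M} {y : M} {r : R} :
    r ∈ N.colon (Submodule.span R {y}) ↔ r • y ∈ N := by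
  rw [Submodule.mem_colon]
  constructor
  · intro h; exact h y (Submodule.mem_span_singleton_self y)
  · intro h p hp
    rcases Submodule.mem_span_singleton.mp hp with ⟨s, rfl⟩
    rw [smul_comm]
    exact N.smul_mem s h

lemma cs_coatom_le {Q K : Submodule R M} (hQ : IsCoatom Q) (hK : K ≠ ⊤) (h : Q ≤ K) : Q = K := by
  rcases h.lt_or_eq with hlt | heq
  · exact absurd (hQ.2 K hlt) hK
  · exact heq

lemma cs_prime_coatom (hmul : IsMultiplicationModule R M)
    (hstarN : ∀ g : ℕ → Submodule R M, SatisfiesStar g)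
    {Q : Submodule R M} (hQ : IsPrimeSubmodule Q) : IsCoatom Q := by
  obtain ⟨K, hK, hle⟩ := cs_exists_coatom hmul hQ.1
  rw [cs_prime_eq_coatom hmul hstarN hQ hK hle]
  exact hK

lemma cs_inf_le_prime (hmul : IsMultiplicationModule R M) {P X Y : Submodule R M}
    (hP : IsPrimeSubmodule P) (h : X ⊓ Y ≤ P) : X ≤ P ∨ Y ≤ P := by
  have hle1 : (X.colon ⊤ * Y.colon ⊤) • (⊤ : Submodule R M) ≤ X ⊓ Y := by
    rw [mul_smul, cs_colon_smul_eq hmul Y]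
    refine le_inf ?_ ?_
    · calc (X.colon ⊤) • Y ≤ (X.colon ⊤) • ⊤ := Submodule.smul_mono le_rfl le_top
      _ = X := cs_colon_smul_eq hmul X
    · exact Submodule.smul_le.mpr fun r hr p hp => Y.smul_mem r hp
  have h2 : (X.colon ⊤ * Y.colon ⊤) ≤ P.colon ⊤ := cs_le_colon_smul _ _ (le_trans hle1 h)
  rcases (cs_colon_isPrime hP).mul_le.mp h2 with h3 | h3
  · exact Or.inl ((cs_le_iff_colon_le hmul).mpr h3)
  · exact Or.inr ((cs_le_iff_colon_le hmul).mpr h3)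

lemma cs_step1 (hmul : IsMultiplicationModule R M)
    (hstarN : ∀ g : ℕ → Submodule R M, SatisfiesStar g)
    {ι : Type*} (N : ι → Submodule R M) {P : Submodule R M}
    (hP : IsPrimeSubmodule P) (hle : (⨅ i, N i) ≤ P) :
    sInf {Q : Submodule R M | IsPrimeSubmodule Q ∧ ∃ i, N i ≤ Q} ≤ P := by
  intro x hx
  obtain ⟨Ix, hIx⟩ := hmul (Submodule.span R {x})
  have hxrad : ∀ i, x ∈ submoduleRad (N i) := by
    intro i
    have hsub : {Q : Submodule R M | IsPrimeSubmodule Q ∧ N i ≤ Q} ⊆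
        {Q : Submodule R M | IsPrimeSubmodule Q ∧ ∃ j, N j ≤ Q} :=
      fun Q hQ => ⟨hQ.1, i, hQ.2⟩
    exact sInf_le_sInf hsub hx
  have hex : ∃ n : ℕ, ∀ i, (Ix ^ n) • (⊤ : Submodule R M) ≤ N i := by
    by_contra hc
    push_neg at hc
    choose f hf using hc
    obtain ⟨n, hn⟩ := hstarN (fun k => N (f k)) x
    exact hf n (hn n (hxrad (f n)) Ix hIx)
  obtain ⟨n, hn⟩ := hex
  have h2 : Ix • (⊤ : Submodule R M) ≤ P :=
    cs_pow_smul_le_prime hmul hP (le_trans (le_iInf hn) hle)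
  exact h2 (hIx ▸ Submodule.mem_span_singleton_self x)

end CS3

private def csSkip (n k : ℕ) : ℕ := if k < n then k else k + 1

private lemma csSkip_ne (n k : ℕ) : csSkip n k ≠ n := by
  unfold csSkip; split_ifs with h <;> omega

private lemma csSkip_sur (n m : ℕ) (h : m ≠ n) : ∃ k, csSkip n k = m := by
  unfold csSkip
  by_cases hm : m < n
  · exact ⟨m, by simp [hm]⟩
  · refine ⟨m - 1, ?_⟩
    have h1 : ¬ (m - 1 < n) := by omega
    simp only [if_neg h1]
    omega

/-- Converse of Theorem 4.4: if every family of submodules of the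
multiplication module `M` satisfies property (*), and for every family of prime
submodules `{P_i}` and every maximal submodule `K`, `⋂ P_i ⊆ K` implies `P_j ⊆ K` for
some `j`, then `M` is coprimely structured. -/
theorem coprimelyStructured_of_prime_le_maximal {R M : Type*} [CommRing R]
    [AddCommGroup M] [Module R M] (hmul : IsMultiplicationModule R M)
    (hstar : ∀ (ι : Type*) (N : ι → Submodule R M), SatisfiesStar N)
    (h : ∀ (ι : Type*) (P : ι → Submodule R M), (∀ i, IsPrimeSubmodule (P i)) →
        ∀ K : Submodule R M, IsCoatom K → (⨅ i, P i) ≤ K → ∃ j, P j ≤ K) :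
    CoprimelyStructured R M := by
  classical
  intro P hP ι N hcop hle
  -- countable star
  have hstarN : ∀ g : ℕ → Submodule R M, SatisfiesStar g := by
    intro g x
    obtain ⟨n, hn⟩ := hstar (ULift ℕ) (fun k => g k.down) x
    exact ⟨n, fun i hi => hn ⟨i⟩ hi⟩
  -- countable h
  have hcount : ∀ (g : ℕ → Submodule R M), (∀ k, IsPrimeSubmodule (g k)) →
      ∀ K : Submodule R M, IsCoatom K → (⨅ k, g k) ≤ K → ∃ j, g j ≤ K := by
    intro g hg K hK hle'
    obtain ⟨j, hj⟩ := h (ULift ℕ) (fun k => g k.down) (fun k => hg k.down) K hK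
      (le_trans (le_iInf fun k : ℕ => iInf_le (fun u : ULift ℕ => g u.down) (ULift.up k)) hle')
    exact ⟨j.down, hj⟩
  set S : Set (Submodule R M) := {Q | IsPrimeSubmodule Q ∧ ∃ i, N i ≤ Q} with hS
  have hSP : sInf S ≤ P := cs_step1 hmul hstarN N hP hle
  have hPco : IsCoatom P := cs_prime_coatom hmul hstarN hP
  have hQco : ∀ Q ∈ S, IsCoatom Q := fun Q hQ => cs_prime_coatom hmul hstarN hQ.1
  have hQP : ∀ Q ∈ S, Q ⊔ P = ⊤ := by
    rintro Q ⟨hQprime, i, hNiQ⟩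
    refine top_unique ?_
    rw [← hcop i]
    exact sup_le_sup_right hNiQ P
  have hE : ∀ g : ℕ → Submodule R M, (∀ k, g k ∈ S) → ¬ (⨅ k, g k) ≤ P := by
    intro g hg hle'
    obtain ⟨j, hj⟩ := hcount g (fun k => (hg k).1) P hPco hle'
    have heq : g j = P := cs_coatom_le (hQco _ (hg j)) hP.1 hj
    have h2 := hQP _ (hg j)
    rw [heq, sup_idem] at h2
    exact hP.1 h2
  by_cases hcase : ∃ y : M, {Q | Q ∈ S ∧ y ∉ Q}.Infinite
  · -- CASE 1 : some element avoids infinitely many members of S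
    obtain ⟨y, hyinf⟩ := hcase
    let e := hyinf.natEmbedding
    set D : ℕ → Submodule R M := fun n => (e n : Submodule R M) with hD
    have hDS : ∀ n, D n ∈ S := fun n => (e n).2.1
    have hDy : ∀ n, y ∉ D n := fun n => (e n).2.2
    have hDinj : Function.Injective D := fun n m hnm => e.injective (Subtype.ext hnm)
    have hDco : ∀ n, IsCoatom (D n) := fun n => hQco _ (hDS n)
    have hDprime : ∀ n, IsPrimeSubmodule (D n) := fun n => (hDS n).1
    by_cases hW : (⨅ n, D n) ⊔ Submodule.span R {y} = ⊤
    · -- cyclic quotient case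
      set c : Ideal R := (⨅ n, D n).colon (Submodule.span R {y}) with hc
      set A : ℕ → Ideal R := fun n => (D n).colon (Submodule.span R {y}) with hA
      have hcA : ∀ n, c ≤ A n := by
        intro n r hr
        exact Submodule.mem_colon.mpr fun p hp => iInf_le D n (Submodule.mem_colon.mp hr p hp)
      have hAproper : ∀ n, A n ≠ ⊤ := by
        intro n htop
        exact hDy n (by simpa using cs_mem_colon_span.mp ((Ideal.eq_top_iff_one _).mp htop))
      have hdecomp : ∀ x : M, ∃ d ∈ (⨅ n, D n), ∃ r : R, x = d + r • y := by
        intro x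
        have hx : x ∈ (⨅ n, D n) ⊔ Submodule.span R {y} := hW ▸ Submodule.mem_top
        rcases Submodule.mem_sup.mp hx with ⟨d, hd, z, hz, hdz⟩
        rcases Submodule.mem_span_singleton.mp hz with ⟨r, rfl⟩
        exact ⟨d, hd, r, hdz.symm⟩
      set F : Ideal R → Submodule R M :=
        fun b => (⨅ n, D n) ⊔ b • Submodule.span R {y} with hF
      have hFmono : ∀ {b b' : Ideal R}, b ≤ b' → F b ≤ F b' :=
        fun hbb => sup_le_sup le_rfl (Submodule.smul_mono hbb le_rfl)
      have hFD : ∀ n, F (A n) = D n := by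
        intro n
        refine le_antisymm ?_ ?_
        · refine sup_le (iInf_le D n) (Submodule.smul_le.mpr ?_)
          intro r hr p hp
          exact Submodule.mem_colon.mp hr p hp
        · intro x hx
          obtain ⟨d, hd, r, rfl⟩ := hdecomp x
          have hry : r • y ∈ D n := by
            have heq : r • y = (d + r • y) - d := (add_sub_cancel_left d (r • y)).symm
            rw [heq]
            exact (D n).sub_mem hx (iInf_le D n hd)
          exact Submodule.add_mem _ (Submodule.mem_sup_left hd)
            (Submodule.mem_sup_right (Submodule.smul_mem_smul
              (cs_mem_colon_span.mpr hry) (Submodule.mem_span_singleton_self y)))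
      have hFcolon : ∀ b : Ideal R, c ≤ b → (F b).colon (Submodule.span R {y}) = b := by
        intro b hcb
        refine le_antisymm ?_ ?_
        · intro r hr
          have hry : r • y ∈ F b := cs_mem_colon_span.mp hr
          rcases Submodule.mem_sup.mp hry with ⟨d, hd, w, hw, hdw⟩
          obtain ⟨t, ht, rfl⟩ := cs_smul_span_singleton hw
          have hdiff : (r - t) • y ∈ (⨅ n, D n) := by
            have heq : (r - t) • y = d := by
              rw [sub_smul, ← hdw]
              abel
            rw [heq]
            exact hd
          have hrt : r - t ∈ c := cs_mem_colon_span.mpr hdiff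
          have heq2 : r = (r - t) + t := by ring
          rw [heq2]
          exact b.add_mem (hcb hrt) ht
        · intro r hr
          exact cs_mem_colon_span.mpr (Submodule.mem_sup_right
            (Submodule.smul_mem_smul hr (Submodule.mem_span_singleton_self y)))
      have hFproper : ∀ b : Ideal R, c ≤ b → b ≠ ⊤ → F b ≠ ⊤ := by
        intro b hcb hbtop hFtop
        apply hbtop
        rw [Ideal.eq_top_iff_one, ← hFcolon b hcb]
        refine cs_mem_colon_span.mpr ?_
        rw [one_smul]
        exact hFtop ▸ Submodule.mem_top
      have hLrec : ∀ L : Submodule R M, (⨅ n, D n) ≤ L →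
          F (L.colon (Submodule.span R {y})) = L := by
        intro L hDL
        refine le_antisymm ?_ ?_
        · exact sup_le hDL (Submodule.smul_le.mpr fun r hr p hp =>
            Submodule.mem_colon.mp hr p hp)
        · intro x hx
          obtain ⟨d, hd, r, rfl⟩ := hdecomp x
          have hry : r • y ∈ L := by
            have heq : r • y = (d + r • y) - d := (add_sub_cancel_left d (r • y)).symm
            rw [heq]
            exact L.sub_mem hx (hDL hd)
          exact Submodule.add_mem _ (Submodule.mem_sup_left hd)
            (Submodule.mem_sup_right (Submodule.smul_mem_smul
              (cs_mem_colon_span.mpr hry) (Submodule.mem_span_singleton_self y)))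
      have hAmax : ∀ n, (A n).IsMaximal := by
        intro n
        rw [Ideal.isMaximal_def]
        constructor
        · exact hAproper n
        · intro b hb
          by_contra hbtop
          have h1 : F b ≠ ⊤ := hFproper b (le_trans (hcA n) hb.le) hbtop
          have h2 : D n ≤ F b := by
            rw [← hFD n]
            exact hFmono hb.le
          have h3 : F b = D n := (cs_coatom_le (hDco n) h1 h2).symm
          have h4 : b = A n := by
            rw [← hFcolon b (le_trans (hcA n) hb.le), h3]
          exact hb.ne' h4
      have hKco : ∀ m : Ideal R, m.IsMaximal → c ≤ m → IsCoatom (F m) := by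
        intro m hm hcm
        constructor
        · exact hFproper m hcm hm.ne_top
        · intro L hL
          have hDL : (⨅ n, D n) ≤ L := le_trans le_sup_left hL.le
          have hrec := hLrec L hDL
          have hml : m ≤ L.colon (Submodule.span R {y}) := by
            have hmono : (F m).colon (Submodule.span R {y}) ≤
                L.colon (Submodule.span R {y}) :=
              fun r hr => Submodule.mem_colon.mpr fun p hp =>
                hL.le (Submodule.mem_colon.mp hr p hp)
            rwa [hFcolon m hcm] at hmono
          by_cases hl : L.colon (Submodule.span R {y}) = ⊤
          · rw [← hrec, hl]
            show (⨅ n, D n) ⊔ (⊤ : Ideal R) • Submodule.span R {y} = ⊤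
            rw [Submodule.top_smul]
            exact hW
          · exfalso
            have : m = L.colon (Submodule.span R {y}) := hm.eq_of_le hl hml
            apply hL.ne
            rw [← hrec, ← this]
      have hb : ∀ n : ℕ, ∃ b : R, (∀ m, m ≠ n → b ∈ A m) ∧ b ∉ A n := by
        intro n
        by_contra hnb
        push_neg at hnb
        have hsub : (⨅ k, D (csSkip n k)) ≤ D n := by
          intro x hx
          obtain ⟨d, hd, r, rfl⟩ := hdecomp x
          have hrA : ∀ m, m ≠ n → r ∈ A m := by
            intro m hm
            obtain ⟨k, rfl⟩ := csSkip_sur n m hm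
            have hxm : d + r • y ∈ D (csSkip n k) := iInf_le (fun k => D (csSkip n k)) k hx
            have hry : r • y ∈ D (csSkip n k) := by
              have heq : r • y = (d + r • y) - d := (add_sub_cancel_left d (r • y)).symm
              rw [heq]
              exact (D (csSkip n k)).sub_mem hxm (iInf_le D (csSkip n k) hd)
            exact cs_mem_colon_span.mpr hry
          have hrn : r ∈ A n := hnb r hrA
          exact Submodule.add_mem _ (iInf_le D n hd) (cs_mem_colon_span.mp hrn)
        obtain ⟨j, hj⟩ := hcount (fun k => D (csSkip n k)) (fun k => hDprime (csSkip n k))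
          (D n) (hDco n) hsub
        have heq : D (csSkip n j) = D n := cs_coatom_le (hDco (csSkip n j)) (hDco n).1 hj
        exact csSkip_ne n j (hDinj heq)
      choose b hb1 hb2 using hb
      by_cases hAtop : ((⨅ n, A n) ⊔ Ideal.span (Set.range b) : Ideal R) = ⊤
      · have h1 : (1 : R) ∈ ((⨅ n, A n) ⊔ Ideal.span (Set.range b) : Ideal R) :=
          (Ideal.eq_top_iff_one _).mp hAtop
        rcases Submodule.mem_sup.mp h1 with ⟨cc, hcc, t, ht, hct⟩
        have hrange : Submodule.span R (Set.range b) = ⨆ n, Submodule.span R {b n} :=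
          Submodule.span_range_eq_iSup
        have ht' : t ∈ ⨆ n, Submodule.span R ({b n} : Set R) := hrange ▸ ht
        rcases Submodule.mem_iSup_iff_exists_finset.mp ht' with ⟨s, hs⟩
        obtain ⟨J, hJ⟩ := Infinite.exists_notMem_finset s
        have htJ : t ∈ A J := by
          have hsle : (⨆ i ∈ s, Submodule.span R ({b i} : Set R)) ≤ A J := by
            refine iSup₂_le ?_
            intro i hi
            rw [Submodule.span_le, Set.singleton_subset_iff]
            exact hb1 i J (by rintro rfl; exact hJ hi)
          exact hsle hs
        have h1J : (1 : R) ∈ A J := by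
          rw [← hct]
          exact (A J).add_mem (iInf_le A J hcc) htJ
        exact hAproper J ((Ideal.eq_top_iff_one _).mpr h1J)
      · obtain ⟨m, hm, hAm⟩ := Ideal.exists_le_maximal _ hAtop
        have hcm : c ≤ m :=
          le_trans (le_trans (le_iInf fun n => hcA n) le_sup_left) hAm
        have hKm : IsCoatom (F m) := hKco m hm hcm
        obtain ⟨n, hn⟩ := hcount D hDprime (F m) hKm le_sup_left
        have hAnm : A n ≤ m := by
          have hmono : (D n).colon (Submodule.span R {y}) ≤
              (F m).colon (Submodule.span R {y}) :=
            fun r hr => Submodule.mem_colon.mpr fun p hp =>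
              hn (Submodule.mem_colon.mp hr p hp)
          rwa [hFcolon m hcm] at hmono
        have heq : A n = m := (hAmax n).eq_of_le hm.ne_top hAnm
        apply hb2 n
        rw [heq]
        exact hAm (Submodule.mem_sup_right (Ideal.subset_span (Set.mem_range_self n)))
    · -- easy case : W proper
      obtain ⟨K, hK, hWK⟩ := cs_exists_coatom hmul hW
      obtain ⟨j, hj⟩ := hcount D hDprime K hK (le_trans le_sup_left hWK)
      have hWy : Submodule.span R {y} ≤ K := le_trans le_sup_right hWK
      have htop : (⊤ : Submodule R M) ≤ K := by
        rw [← cs_coatom_sup_span (hDco j) (hDy j)]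
        exact sup_le hj hWy
      exact hK.1 (top_unique htop)
  · -- CASE 2 : every element avoids only finitely many members of S
    have hfin : ∀ y : M, {Q | Q ∈ S ∧ y ∉ Q}.Finite := by
      intro y
      by_contra hif
      exact hcase ⟨y, hif⟩
    have hG : ∃ G : Set (Submodule R M), G.Finite ∧ G ⊆ S ∧ ¬ sInf (S \ G) ≤ P := by
      by_contra hng
      push_neg at hng
      apply hP.1
      refine top_unique fun x _ => ?_
      have hx : x ∈ sInf (S \ {Q | Q ∈ S ∧ x ∉ Q}) := by
        refine Submodule.mem_sInf.mpr ?_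
        rintro Q ⟨hQS, hQn⟩
        by_contra hxQ
        exact hQn ⟨hQS, hxQ⟩
      exact hng {Q | Q ∈ S ∧ x ∉ Q} (hfin x) (fun Q hQ => hQ.1) hx
    obtain ⟨G, hGfin, hGS, hGP⟩ := hG
    have hsplit : sInf (S \ G) ⊓ sInf G = sInf S := by
      rw [← sInf_union, Set.diff_union_of_subset hGS]
    rcases cs_inf_le_prime hmul hP (le_trans (le_of_eq hsplit) hSP) with hX | hY
    · exact hGP hX
    · rcases Set.eq_empty_or_nonempty G with rfl | hGne
      · rw [sInf_empty] at hY
        exact hP.1 (top_unique hY)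
      · obtain ⟨g, hg⟩ := Set.Countable.exists_eq_range hGfin.countable hGne
        refine hE g ?_ ?_
        · intro k
          apply hGS
          rw [hg]
          exact Set.mem_range_self k
        · have heq : (⨅ k, g k) = sInf G := by
            rw [hg, sInf_range]
          rw [heq]
          exact hY
end

section
/- Let R be a commutative ring with identity and M a multiplication R-module such that every family of submodules of M satisfies property (*). Let N be a submodule of M with N ⊆ rad(0). Then M/N is coprimely structured if and only if M is coprimely structured. -/
universe v

/-- If `P` is a prime submodule and `(J * K) • ⊤ ≤ P`, then `J • ⊤ ≤ P` or `K • ⊤ ≤ P`. -/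
private lemma aux_mul_smul_top_le {R M : Type*} [CommRing R] [AddCommGroup M] [Module R M]
    {P : Submodule R M} (hP : IsPrimeSubmodule P)
    {J K : Ideal R} (h : (J * K) • (⊤ : Submodule R M) ≤ P) :
    J • (⊤ : Submodule R M) ≤ P ∨ K • (⊤ : Submodule R M) ≤ P := by
  by_cases hK : K • (⊤ : Submodule R M) ≤ P
  · exact Or.inr hK
  · left
    rw [Submodule.smul_le] at hK ⊢
    push_neg at hK
    obtain ⟨k, hk, m, hm, hkm⟩ := hK
    intro j hj m' _
    have hmem : (j * k) • m ∈ P := Submodule.smul_le.mp h _ (Ideal.mul_mem_mul hj hk) m trivial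
    rw [mul_smul] at hmem
    rcases hP.2 j (k • m) hmem with h1 | h2
    · exact absurd h1 hkm
    · exact h2 m'

/-- If `P` is a prime submodule and `I ^ n • ⊤ ≤ P` with `n ≠ 0`, then `I • ⊤ ≤ P`. -/
private lemma aux_pow_smul_top_le {R M : Type*} [CommRing R] [AddCommGroup M] [Module R M]
    {P : Submodule R M} (hP : IsPrimeSubmodule P) {I : Ideal R} :
    ∀ {n : ℕ}, n ≠ 0 → I ^ n • (⊤ : Submodule R M) ≤ P → I • (⊤ : Submodule R M) ≤ P := by
  intro n
  induction n with
  | zero => exact fun h _ => absurd rfl h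
  | succ k ih =>
    intro _ h
    rw [pow_succ] at h
    rcases aux_mul_smul_top_le hP h with h1 | h2
    · rcases Nat.eq_zero_or_pos k with hk | hk
      · subst hk
        rw [pow_zero, Ideal.one_eq_top, Submodule.top_smul] at h1
        exact absurd (top_le_iff.mp h1) hP.1
      · exact ih hk.ne' h1
    · exact h2

/-- Every prime submodule contains `submoduleRad ⊥`. -/
private lemma aux_rad_bot_le {R M : Type*} [CommRing R] [AddCommGroup M] [Module R M]
    {P : Submodule R M} (hP : IsPrimeSubmodule P) :
    submoduleRad (⊥ : Submodule R M) ≤ P :=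
  sInf_le ⟨hP, bot_le⟩

/-- The universe-free, set-indexed version of being coprimely structured at `P`. -/
def CoprimelyStructuredSetAt {R M : Type*} [CommRing R] [AddCommGroup M] [Module R M]
    (P : Submodule R M) : Prop :=
  ∀ S : Set (Submodule R M), (∀ K ∈ S, K ⊔ P = ⊤) → ¬ sInf S ≤ P

/-- The countable (ℕ-indexed) version of being coprimely structured, at all primes. -/
def CountablyCoprimelyStructured (R M : Type*) [CommRing R] [AddCommGroup M]
    [Module R M] : Prop :=
  ∀ P : Submodule R M, IsPrimeSubmodule P → ∀ f : ℕ → Submodule R M,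
    (∀ n, f n ⊔ P = ⊤) → ¬ (⨅ n, f n) ≤ P

universe u

/-- The set-indexed version implies the family version at any universe. -/
private lemma aux_csAt_of_setAt {R M : Type*} [CommRing R] [AddCommGroup M] [Module R M]
    {P : Submodule R M} (h : CoprimelyStructuredSetAt P) :
    CoprimelyStructuredAt.{_, _, u} P := by
  intro ι N hsup hle
  exact h (Set.range N) (by rintro K ⟨i, rfl⟩; exact hsup i) (by rwa [sInf_range])

/-- Coprimely structured (at any universe) implies countably coprimely structured. -/
private lemma aux_countable_of_cs {R M : Type*} [CommRing R] [AddCommGroup M] [Module R M]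
    (h : CoprimelyStructured.{u} R M) : CountablyCoprimelyStructured R M := by
  intro P hP f hsup hle
  refine h P hP (ULift.{u} ℕ) (fun i => f i.down) (fun i => hsup i.down) ?_
  refine le_trans (le_of_eq ?_) hle
  exact le_antisymm (le_iInf fun n => iInf_le _ (ULift.up n)) (le_iInf fun i => iInf_le _ i.down)

/-- Primes of `M` pull back primes of `M ⧸ N`. -/
private lemma aux_prime_comap {R M : Type*} [CommRing R] [AddCommGroup M] [Module R M]
    {N : Submodule R M} {P' : Submodule R (M ⧸ N)} (hP' : IsPrimeSubmodule P') :
    IsPrimeSubmodule (Submodule.comap N.mkQ P') := by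
  have hmapcomap : (Submodule.comap N.mkQ P').map N.mkQ = P' := by
    rw [Submodule.map_comap_eq, Submodule.range_mkQ, top_inf_eq]
  constructor
  · intro htop
    apply hP'.1
    rw [← hmapcomap, htop, Submodule.map_top, Submodule.range_mkQ]
  · intro r m hrm
    have : r • N.mkQ m ∈ P' := by rw [← map_smul]; exact hrm
    rcases hP'.2 r (N.mkQ m) this with h1 | h2
    · exact Or.inl h1
    · refine Or.inr fun x => ?_
      show N.mkQ (r • x) ∈ P'
      rw [map_smul]; exact h2 (N.mkQ x)

/-- Primes of `M` containing `N` push forward to primes of `M ⧸ N`. -/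
private lemma aux_prime_map {R M : Type*} [CommRing R] [AddCommGroup M] [Module R M]
    {N : Submodule R M} {P : Submodule R M} (hP : IsPrimeSubmodule P) (hNP : N ≤ P) :
    IsPrimeSubmodule (P.map N.mkQ) := by
  constructor
  · intro htop
    apply hP.1
    have h2 := congrArg (Submodule.comap N.mkQ) htop
    rwa [Submodule.comap_map_eq, Submodule.ker_mkQ, sup_eq_left.mpr hNP,
      Submodule.comap_top] at h2
  · intro r m' hm'
    obtain ⟨m, rfl⟩ := N.mkQ_surjective m'
    have hrm : r • m ∈ P := by
      have : N.mkQ (r • m) ∈ P.map N.mkQ := by rw [map_smul]; exact hm'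
      obtain ⟨p, hp, hpe⟩ := this
      have hdiff : r • m - p ∈ N := by
        rw [← Submodule.ker_mkQ N, LinearMap.mem_ker, map_sub, hpe, sub_self]
      have : (r • m - p) + p ∈ P := P.add_mem (hNP hdiff) hp
      simpa using this
    rcases hP.2 r m hrm with h1 | h2
    · exact Or.inl ⟨m, h1, rfl⟩
    · refine Or.inr fun x' => ?_
      obtain ⟨x, rfl⟩ := N.mkQ_surjective x'
      exact ⟨r • x, h2 x, (map_smul N.mkQ r x).symm⟩

/-- The heart of Statement 15, in countable form: if `M ⧸ N` is countably coprimely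
structured, so is `M`.  This uses the multiplication hypothesis, property (*) (via a
diagonal ℕ-indexed family), and `N ≤ rad ⊥`. -/
private lemma aux_countable_transfer {R M : Type*} [CommRing R] [AddCommGroup M]
    [Module R M] (hmul : IsMultiplicationModule R M)
    (hstar : ∀ (ι : Type*) (N : ι → Submodule R M), SatisfiesStar N)
    (N : Submodule R M) (hN : N ≤ submoduleRad (⊥ : Submodule R M))
    (hq : CountablyCoprimelyStructured R (M ⧸ N)) :
    CountablyCoprimelyStructured R M := by
  intro P hP f hsup hle
  have hNP : N ≤ P := hN.trans (aux_rad_bot_le hP)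
  refine hq (P.map N.mkQ) (aux_prime_map hP hNP) (fun n => (f n).map N.mkQ)
    (fun n => by rw [← Submodule.map_sup, hsup n, Submodule.map_top, Submodule.range_mkQ]) ?_
  intro x' hx'
  obtain ⟨x, rfl⟩ := N.mkQ_surjective x'
  have hxi : ∀ n, x ∈ f n ⊔ N := by
    intro n
    have : x ∈ Submodule.comap N.mkQ ((f n).map N.mkQ) :=
      Submodule.mem_iInf _ |>.mp hx' n
    rwa [Submodule.comap_map_eq, Submodule.ker_mkQ] at this
  have hxrad : ∀ n, x ∈ submoduleRad (f n) := by
    intro n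
    refine Submodule.mem_sInf.mpr fun Q hQ => ?_
    exact sup_le hQ.2 (hN.trans (aux_rad_bot_le hQ.1)) (hxi n)
  obtain ⟨I, hI⟩ := hmul (Submodule.span R {x})
  have key : ∃ n : ℕ, ∀ m, I ^ n • (⊤ : Submodule R M) ≤ f m := by
    by_contra hcon
    push_neg at hcon
    choose g hg using hcon
    obtain ⟨n, hn⟩ := hstar (ULift ℕ) (fun k => f (g k.down)) x
    exact hg n (hn ⟨n⟩ (hxrad _) I hI)
  obtain ⟨n, hn⟩ := key
  have hPn : I ^ n • (⊤ : Submodule R M) ≤ P := (le_iInf hn).trans hle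
  have hxP : x ∈ P := by
    rcases Nat.eq_zero_or_pos n with h0 | h0
    · subst h0
      rw [pow_zero, Ideal.one_eq_top, Submodule.top_smul] at hPn
      exact absurd (top_le_iff.mp hPn) hP.1
    · have := aux_pow_smul_top_le hP h0.ne' hPn
      rw [← hI] at this
      exact this (Submodule.mem_span_singleton_self x)
  exact ⟨x, hxP, rfl⟩

/-- In a multiplication module, every submodule is recovered from its colon ideal. -/
private lemma aux_colon_smul_top {R M : Type*} [CommRing R] [AddCommGroup M] [Module R M]
    (hmul : IsMultiplicationModule R M) (V : Submodule R M) :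
    (V.colon ⊤) • (⊤ : Submodule R M) = V := by
  obtain ⟨I, hI⟩ := hmul V
  apply le_antisymm
  · rw [Submodule.smul_le]
    intro r hr m _
    exact Submodule.mem_colon.mp hr m trivial
  · have hIcolon : I ≤ V.colon ⊤ := by
      intro r hr
      rw [Submodule.mem_colon]
      intro m _
      rw [hI]
      exact Submodule.smul_mem_smul hr trivial
    calc V = I • ⊤ := hI
    _ ≤ (V.colon ⊤) • ⊤ := Submodule.smul_mono_left hIcolon

/-- The colon ideal of a prime submodule is a prime ideal. -/
private lemma aux_colon_isPrime {R M : Type*} [CommRing R] [AddCommGroup M] [Module R M]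
    {P : Submodule R M} (hP : IsPrimeSubmodule P) : (P.colon ⊤).IsPrime := by
  constructor
  · intro h
    apply hP.1
    rw [eq_top_iff]
    intro m _
    simpa using Submodule.mem_colon.mp (h ▸ Submodule.mem_top : (1 : R) ∈ P.colon ⊤) m trivial
  · intro a b hab
    by_cases ha : a ∈ P.colon ⊤
    · exact Or.inl ha
    · right
      rw [Submodule.mem_colon] at ha ⊢
      push_neg at ha
      obtain ⟨m₀, _, hm₀⟩ := ha
      intro m _
      have : a • (b • m) ∈ P := by
        rw [← mul_smul]
        exact Submodule.mem_colon.mp hab m trivial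
      rcases hP.2 a (b • m) this with h1 | h2
      · exact h1
      · exact absurd (h2 m₀) hm₀

/-- Meets of submodules not contained in a prime are not contained in the prime. -/
private lemma aux_inf_not_le_prime {R M : Type*} [CommRing R] [AddCommGroup M] [Module R M]
    (hmul : IsMultiplicationModule R M) {P X Y : Submodule R M} (hP : IsPrimeSubmodule P)
    (hX : ¬ X ≤ P) (hY : ¬ Y ≤ P) : ¬ X ⊓ Y ≤ P := by
  intro hle
  have hmid : ((X.colon ⊤) * (Y.colon ⊤)) • (⊤ : Submodule R M) ≤ X ⊓ Y := by
    rw [← smul_eq_mul, Submodule.smul_assoc, aux_colon_smul_top hmul Y]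
    refine le_inf ?_ ?_
    · rw [Submodule.smul_le]
      intro r hr m _
      exact Submodule.mem_colon.mp hr m trivial
    · exact Submodule.smul_le_right
  rcases aux_mul_smul_top_le hP (hmid.trans hle) with h | h
  · rw [aux_colon_smul_top hmul X] at h; exact hX h
  · rw [aux_colon_smul_top hmul Y] at h; exact hY h

/-- Elements of `I • span {w}` are of the form `c • w` with `c ∈ I`. -/
private lemma aux_mem_smul_span_singleton {R M : Type*} [CommRing R] [AddCommGroup M]
    [Module R M] {I : Ideal R} {w : M} {u : M}
    (hu : u ∈ I • Submodule.span R {w}) : ∃ c ∈ I, c • w = u := by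
  refine Submodule.smul_induction_on hu ?_ ?_
  · intro a ha s hs
    obtain ⟨t, rfl⟩ := Submodule.mem_span_singleton.mp hs
    exact ⟨a * t, I.mul_mem_right t ha, by rw [mul_smul]⟩
  · rintro x y ⟨c1, hc1, rfl⟩ ⟨c2, hc2, rfl⟩
    exact ⟨c1 + c2, I.add_mem hc1 hc2, by rw [add_smul]⟩

/-- Stabilization of powers: property (*) yields, for each `x`, an ideal `I` with
`span {x} = I • ⊤` whose power chain `I ^ m • ⊤` stabilizes. -/
private lemma aux_stab {R M : Type*} [CommRing R] [AddCommGroup M] [Module R M]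
    (hmul : IsMultiplicationModule R M)
    (hstar : ∀ (ι : Type*) (N : ι → Submodule R M), SatisfiesStar N) (x : M) :
    ∃ (I : Ideal R) (n : ℕ), 0 < n ∧ Submodule.span R {x} = I • (⊤ : Submodule R M) ∧
      ∀ m, n ≤ m → I ^ m • (⊤ : Submodule R M) = I ^ n • (⊤ : Submodule R M) := by
  obtain ⟨I, hI⟩ := hmul (Submodule.span R {x})
  obtain ⟨n₀, hn₀⟩ := hstar (ULift ℕ) (fun k => I ^ k.down • (⊤ : Submodule R M)) x
  have hrad : ∀ k : ℕ, x ∈ submoduleRad (I ^ k • (⊤ : Submodule R M)) := by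
    intro k
    refine Submodule.mem_sInf.mpr ?_
    rintro Q ⟨hQp, hQle⟩
    rcases Nat.eq_zero_or_pos k with hk | hk
    · subst hk
      rw [pow_zero, Ideal.one_eq_top, Submodule.top_smul] at hQle
      exact absurd (top_le_iff.mp hQle) hQp.1
    · have : I • (⊤ : Submodule R M) ≤ Q := aux_pow_smul_top_le hQp hk.ne' hQle
      rw [← hI] at this
      exact this (Submodule.mem_span_singleton_self x)
  have hkey : ∀ k : ℕ, I ^ n₀ • (⊤ : Submodule R M) ≤ I ^ k • (⊤ : Submodule R M) :=
    fun k => hn₀ ⟨k⟩ (hrad k) I hI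
  have hdesc : ∀ a b : ℕ, a ≤ b → I ^ b • (⊤ : Submodule R M) ≤ I ^ a • (⊤ : Submodule R M) := by
    intro a b hab
    obtain ⟨c, rfl⟩ := Nat.exists_eq_add_of_le hab
    rw [pow_add, mul_comm, ← smul_eq_mul, Submodule.smul_assoc]
    exact Submodule.smul_le_right
  refine ⟨I, max n₀ 1, lt_of_lt_of_le one_pos (le_max_right _ _), hI, ?_⟩
  intro m hm
  have h1 : I ^ m • (⊤ : Submodule R M) = I ^ n₀ • (⊤ : Submodule R M) :=
    le_antisymm (hdesc n₀ m ((le_max_left _ _).trans hm)) (hkey m)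
  have h2 : I ^ max n₀ 1 • (⊤ : Submodule R M) = I ^ n₀ • (⊤ : Submodule R M) :=
    le_antisymm (hdesc n₀ _ (le_max_left _ _)) (hkey _)
  rw [h1, h2]

/-- The stabilized power is contained in the cyclic submodule. -/
private lemma aux_pow_smul_le_span {R M : Type*} [CommRing R] [AddCommGroup M] [Module R M]
    {I : Ideal R} {x : M} (hI : Submodule.span R {x} = I • (⊤ : Submodule R M))
    {n : ℕ} (hn : 0 < n) : I ^ n • (⊤ : Submodule R M) ≤ Submodule.span R {x} := by
  obtain ⟨k, rfl⟩ : ∃ k, n = k + 1 := ⟨n - 1, by omega⟩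
  rw [pow_succ, ← smul_eq_mul, Submodule.smul_assoc, ← hI]
  exact Submodule.smul_le_right

/-- Ideal actions on submodules commute. -/
private lemma aux_smul_smul_comm {R M : Type*} [CommRing R] [AddCommGroup M] [Module R M]
    (I J : Ideal R) (N : Submodule R M) : I • (J • N) = J • (I • N) := by
  rw [← Submodule.smul_assoc, ← Submodule.smul_assoc, smul_eq_mul, smul_eq_mul, mul_comm]

/-- Existence of a maximal ideal whose multiple misses a given proper submodule. -/
private lemma aux_exists_maximal {R M : Type*} [CommRing R] [AddCommGroup M] [Module R M]
    (hmul : IsMultiplicationModule R M) {V : Submodule R M} (hV : V ≠ ⊤) :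
    ∃ p : Ideal R, p.IsMaximal ∧ p • (⊤ : Submodule R M) ⊔ V ≠ ⊤ := by
  by_contra hcon
  push_neg at hcon
  obtain ⟨z, -, hz⟩ : ∃ z, z ∈ (⊤ : Submodule R M) ∧ z ∉ V := by
    by_contra h
    push_neg at h
    exact hV (eq_top_iff.mpr fun m _ => h m trivial)
  set d : Ideal R := V.colon (Submodule.span R {z}) with hd
  have hd_ne : d ≠ ⊤ := by
    intro h
    apply hz
    have : (1 : R) ∈ d := h ▸ Submodule.mem_top
    simpa using Submodule.mem_colon.mp this z (Submodule.mem_span_singleton_self z)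
  obtain ⟨p, hpmax, hdp⟩ := Ideal.exists_le_maximal d hd_ne
  obtain ⟨Iz, hIz⟩ := hmul (Submodule.span R {z})
  have hz_mem : z ∈ p • Submodule.span R {z} ⊔ V := by
    have h1 : Submodule.span R {z} ≤ p • Submodule.span R {z} ⊔ V := by
      calc Submodule.span R {z} = Iz • (⊤ : Submodule R M) := hIz
      _ = Iz • (p • (⊤ : Submodule R M) ⊔ V) := by rw [hcon p hpmax]
      _ = Iz • (p • (⊤ : Submodule R M)) ⊔ Iz • V := Submodule.smul_sup _ _ _
      _ ≤ p • (Iz • (⊤ : Submodule R M)) ⊔ V := by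
          refine sup_le_sup ?_ Submodule.smul_le_right
          rw [aux_smul_smul_comm]
      _ = p • Submodule.span R {z} ⊔ V := by rw [← hIz]
    exact h1 (Submodule.mem_span_singleton_self z)
  obtain ⟨u, hu, v, hv, huv⟩ := Submodule.mem_sup.mp hz_mem
  obtain ⟨ρ, hρ, hρu⟩ := aux_mem_smul_span_singleton hu
  have h1ρ : (1 - ρ) • z ∈ V := by
    have : z - u = v := by rw [← huv]; abel
    rw [sub_smul, one_smul, hρu, this]
    exact hv
  have : (1 - ρ) ∈ d := Submodule.mem_colon.mpr (by
    intro m hm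
    obtain ⟨t, rfl⟩ := Submodule.mem_span_singleton.mp hm
    rw [smul_comm]
    exact Submodule.smul_mem V t h1ρ)
  have : (1 : R) ∈ p := by
    have := p.add_mem (hdp this) hρ
    simpa using this
  exact hpmax.ne_top (Ideal.eq_top_of_isUnit_mem p this isUnit_one)

/-- Ring-level cancellation: under the two compatibility conditions, `c ∈ ph`. -/
private lemma aux_ring_cancel {R : Type*} [CommRing R] {ph q I : Ideal R} {τ c : R} {n : ℕ}
    (hph : ph.IsPrime) (hq : q.IsPrime) (hn : 0 < n)
    (hcI : c ∈ I) (hIq : I ≤ q) (hphq : ph ≤ q) (hτq : τ ∉ q)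
    (comp1 : ∀ b ∈ I, ∃ r : R, τ * b - r * c ∈ ph)
    (comp2 : ∀ a ∈ I ^ n, ∃ b ∈ I ^ (2 * n), a - b ∈ ph) :
    c ∈ ph := by
  have claimA : ∀ (k : ℕ) (a : R), a ∈ I ^ k → ∃ r : R, τ ^ k * a - r * c ^ k ∈ ph := by
    intro k
    induction k with
    | zero =>
      intro a _
      exact ⟨a, by simp⟩
    | succ k ih =>
      intro a ha
      rw [pow_succ] at ha
      refine Submodule.mul_induction_on
        (C := fun a => ∃ r : R, τ ^ (k + 1) * a - r * c ^ (k + 1) ∈ ph) ha ?_ ?_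
      · intro x hx y hy
        obtain ⟨r₁, hr₁⟩ := ih x hx
        obtain ⟨r₂, hr₂⟩ := comp1 y hy
        refine ⟨r₁ * r₂, ?_⟩
        have heq : τ ^ (k + 1) * (x * y) - r₁ * r₂ * c ^ (k + 1)
            = (τ ^ k * x - r₁ * c ^ k) * (τ * y) + (r₁ * c ^ k) * (τ * y - r₂ * c) := by
          ring
        rw [heq]
        exact ph.add_mem (ph.mul_mem_right _ hr₁) (ph.mul_mem_left _ hr₂)
      · rintro x y ⟨r₁, hr₁⟩ ⟨r₂, hr₂⟩
        refine ⟨r₁ + r₂, ?_⟩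
        have heq : τ ^ (k + 1) * (x + y) - (r₁ + r₂) * c ^ (k + 1)
            = (τ ^ (k + 1) * x - r₁ * c ^ (k + 1)) + (τ ^ (k + 1) * y - r₂ * c ^ (k + 1)) := by
          ring
        rw [heq]
        exact ph.add_mem hr₁ hr₂
  obtain ⟨b, hb, hcb⟩ := comp2 (c ^ n) (Ideal.pow_mem_pow hcI n)
  obtain ⟨r, hr⟩ := claimA (2 * n) b hb
  have hkey : c ^ n * (τ ^ (2 * n) - r * c ^ n) ∈ ph := by
    have h1 : τ ^ (2 * n) * (c ^ n - b) ∈ ph := ph.mul_mem_left _ hcb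
    have heq : c ^ n * (τ ^ (2 * n) - r * c ^ n)
        = τ ^ (2 * n) * (c ^ n - b) + (τ ^ (2 * n) * b - r * c ^ (2 * n)) := by
      have h2n : c ^ (2 * n) = c ^ n * c ^ n := by rw [two_mul, pow_add]
      rw [h2n]
      ring
    rw [heq]
    exact ph.add_mem h1 hr
  rcases hph.mem_or_mem hkey with h | h
  · exact hph.mem_of_pow_mem _ h
  · exfalso
    obtain ⟨k, rfl⟩ : ∃ k, n = k + 1 := ⟨n - 1, by omega⟩
    have hcnq : c ^ (k + 1) ∈ q := by
      rw [pow_succ]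
      exact q.mul_mem_left _ (hIq hcI)
    have hτ2n : τ ^ (2 * (k + 1)) ∈ q := by
      have h2 : τ ^ (2 * (k + 1)) - r * c ^ (k + 1) ∈ q := hphq h
      have h3 : r * c ^ (k + 1) ∈ q := q.mul_mem_left r hcnq
      have := q.add_mem h2 h3
      rwa [sub_add_cancel] at this
    exact hτq (hq.mem_of_pow_mem _ hτ2n)

set_option maxHeartbeats 1000000 in
/-- KEY LEMMA (0-dimensionality): in a multiplication module with property (*),
if `P` is prime and `z ∉ P` then `span {z} ⊔ P = ⊤`. -/
private lemma aux_span_sup_prime {R M : Type*} [CommRing R] [AddCommGroup M] [Module R M]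
    (hmul : IsMultiplicationModule R M)
    (hstar : ∀ (ι : Type*) (N : ι → Submodule R M), SatisfiesStar N)
    {P : Submodule R M} (hP : IsPrimeSubmodule P) {z : M} (hz : z ∉ P) :
    Submodule.span R {z} ⊔ P = ⊤ := by
  by_contra hV
  obtain ⟨p, hpmax, hC⟩ := aux_exists_maximal hmul hV
  set C := p • (⊤ : Submodule R M) ⊔ (Submodule.span R {z} ⊔ P) with hCdef
  have hPC : P ≤ C := le_sup_of_le_right le_sup_right
  have hspanzC : Submodule.span R {z} ≤ C := le_sup_of_le_right le_sup_left
  have hzC : z ∈ C := hspanzC (Submodule.mem_span_singleton_self z)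
  have hcoatom : ∀ y : M, y ∉ C → C ⊔ Submodule.span R {y} = ⊤ := by
    intro y hy
    obtain ⟨Iy, hIy⟩ := hmul (Submodule.span R {y})
    have hIyp : ¬ Iy ≤ p := by
      intro h
      exact hy ((le_sup_of_le_left (Submodule.smul_mono_left h) : Iy • (⊤ : Submodule R M) ≤ C)
        (hIy ▸ Submodule.mem_span_singleton_self y))
    obtain ⟨t, ht, htp⟩ := SetLike.not_le_iff_exists.mp hIyp
    have hlt : p < p ⊔ Iy := by
      refine lt_of_le_of_ne le_sup_left fun h => hIyp ?_
      rw [h]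
      exact le_sup_right
    have hsup : p ⊔ Iy = ⊤ := hpmax.out.2 _ hlt
    rw [eq_top_iff]
    calc (⊤ : Submodule R M) = ((⊤ : Ideal R)) • (⊤ : Submodule R M) :=
          (Submodule.top_smul (⊤ : Submodule R M)).symm
    _ = (p ⊔ Iy) • ⊤ := by rw [hsup]
    _ = p • ⊤ ⊔ Iy • ⊤ := Submodule.sup_smul p Iy ⊤
    _ ≤ C ⊔ Submodule.span R {y} := sup_le_sup le_sup_left (le_of_eq hIy.symm)
  have hCprime : IsPrimeSubmodule C := by
    refine ⟨hC, ?_⟩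
    intro r m hrm
    by_cases hm : m ∈ C
    · exact Or.inl hm
    · right
      intro x
      have hx : x ∈ C ⊔ Submodule.span R {m} := (hcoatom m hm) ▸ Submodule.mem_top
      obtain ⟨cx, hcx, s, hs, hxe⟩ := Submodule.mem_sup.mp hx
      obtain ⟨t, rfl⟩ := Submodule.mem_span_singleton.mp hs
      have : r • x = r • cx + t • (r • m) := by
        rw [← hxe, smul_add, smul_comm r t m]
      rw [this]
      exact C.add_mem (C.smul_mem r hcx) (C.smul_mem t hrm)
  set q := C.colon ⊤ with hqdef
  have hqprime : q.IsPrime := aux_colon_isPrime hCprime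
  have hqC : q • (⊤ : Submodule R M) = C := aux_colon_smul_top hmul C
  set ph := P.colon ⊤ with hphdef
  haveI hphprime : ph.IsPrime := aux_colon_isPrime hP
  have hphq : ph ≤ q := fun r hr => Submodule.mem_colon.mpr
    (fun m hm => hPC (Submodule.mem_colon.mp hr m hm))
  obtain ⟨I, n, hn, hspan, hstab⟩ := aux_stab hmul hstar z
  have hIq : I ≤ q := by
    intro r hr
    exact Submodule.mem_colon.mpr fun m _ =>
      hspanzC (hspan ▸ Submodule.smul_mem_smul hr trivial : r • m ∈ Submodule.span R {z})
  obtain ⟨w, hw⟩ : ∃ w, w ∉ C := by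
    by_contra h
    push_neg at h
    exact hC (eq_top_iff.mpr fun m _ => h m)
  obtain ⟨Iw, hIw⟩ := hmul (Submodule.span R {w})
  obtain ⟨τ, hτIw, hτq⟩ : ∃ τ ∈ Iw, τ ∉ q := by
    by_contra h
    push_neg at h
    apply hw
    have : Submodule.span R {w} ≤ C := by
      rw [hIw, ← hqC]
      exact Submodule.smul_mono_left h
    exact this (Submodule.mem_span_singleton_self w)
  have hτtop : ∀ m : M, τ • m ∈ Submodule.span R {w} := fun m =>
    hIw ▸ Submodule.smul_mem_smul hτIw trivial
  have hwP : w ∉ P := fun h => hw (hPC h)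
  have hτP : τ ∉ ph := fun h => hτq (hphq h)
  -- the coefficient c with τ • z = c • w
  have hzI : z ∈ I • (⊤ : Submodule R M) := hspan ▸ Submodule.mem_span_singleton_self z
  have hτz : τ • z ∈ I • Submodule.span R {w} := by
    refine Submodule.smul_induction_on (p := fun u => τ • u ∈ I • Submodule.span R {w})
      hzI ?_ ?_
    · intro a ha m _
      rw [smul_comm]
      exact Submodule.smul_mem_smul ha (hτtop m)
    · intro u v hu hv
      rw [smul_add]
      exact Submodule.add_mem _ hu hv
  obtain ⟨c, hcI, hcw⟩ := aux_mem_smul_span_singleton hτz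
  -- comp1 and comp2
  have comp1 : ∀ b ∈ I, ∃ r : R, τ * b - r * c ∈ ph := by
    intro b hb
    have hbw : b • w ∈ Submodule.span R {z} := hspan ▸ Submodule.smul_mem_smul hb trivial
    obtain ⟨r, hr⟩ := Submodule.mem_span_singleton.mp hbw
    refine ⟨r, ?_⟩
    have h0 : (τ * b - r * c) • w = 0 := by
      rw [sub_smul, mul_smul, mul_smul, ← hr, hcw, smul_comm τ r z, sub_self]
    have : (τ * b - r * c) • w ∈ P := by rw [h0]; exact P.zero_mem
    rcases hP.2 _ w this with h | h
    · exact absurd h hwP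
    · exact Submodule.mem_colon.mpr fun m _ => h m
  have comp2 : ∀ a ∈ I ^ n, ∃ b ∈ I ^ (2 * n), a - b ∈ ph := by
    intro a ha
    have e1 : I ^ n • Submodule.span R {z} = I ^ (n + 1) • (⊤ : Submodule R M) := by
      rw [hspan, ← Submodule.smul_assoc, smul_eq_mul, ← pow_succ]
    have e2 : I ^ (2 * n) • Submodule.span R {z} = I ^ (2 * n + 1) • (⊤ : Submodule R M) := by
      rw [hspan, ← Submodule.smul_assoc, smul_eq_mul, ← pow_succ]
    have heq : I ^ n • Submodule.span R {z} = I ^ (2 * n) • Submodule.span R {z} := by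
      rw [e1, e2, hstab (n + 1) (by omega), hstab (2 * n + 1) (by omega)]
    have h1 : a • z ∈ I ^ (2 * n) • Submodule.span R {z} :=
      heq ▸ Submodule.smul_mem_smul ha (Submodule.mem_span_singleton_self z)
    obtain ⟨b, hb, hbe⟩ := aux_mem_smul_span_singleton h1
    have h0 : (a - b) • z ∈ P := by
      rw [sub_smul, hbe, sub_self]
      exact P.zero_mem
    rcases hP.2 _ z h0 with h | h
    · exact absurd h hz
    · exact ⟨b, hb, Submodule.mem_colon.mpr fun m _ => h m⟩
  -- ring-level cancellation gives c ∈ ph, whence a contradiction with primality at τ • z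
  have hcph : c ∈ ph := aux_ring_cancel hphprime hqprime hn hcI hIq hphq hτq comp1 comp2
  have : τ • z ∈ P := hcw ▸ Submodule.mem_colon.mp hcph w trivial
  rcases hP.2 τ z this with h' | h'
  · exact hz h'
  · exact hτP (Submodule.mem_colon.mpr fun m _ => h' m)

/-- Comaximality criterion: a submodule not contained in a prime is comaximal with it. -/
private lemma aux_not_le_sup_prime {R M : Type*} [CommRing R] [AddCommGroup M] [Module R M]
    (hmul : IsMultiplicationModule R M)
    (hstar : ∀ (ι : Type*) (N : ι → Submodule R M), SatisfiesStar N)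
    {P K : Submodule R M} (hP : IsPrimeSubmodule P) (hK : ¬ K ≤ P) : K ⊔ P = ⊤ := by
  obtain ⟨z, hzK, hzP⟩ := SetLike.not_le_iff_exists.mp hK
  rw [eq_top_iff, ← aux_span_sup_prime hmul hstar hP hzP]
  exact sup_le_sup_right ((Submodule.span_le (p := K)).mpr (by simpa using hzK)) P

/-- Avoiding two submodules at once. -/
private lemma aux_two_avoid {R M : Type*} [CommRing R] [AddCommGroup M] [Module R M]
    {X Y₁ Y₂ : Submodule R M} (h1 : ¬ X ≤ Y₁) (h2 : ¬ X ≤ Y₂) :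
    ∃ x ∈ X, x ∉ Y₁ ∧ x ∉ Y₂ := by
  obtain ⟨a, haX, ha1⟩ := SetLike.not_le_iff_exists.mp h1
  obtain ⟨b, hbX, hb2⟩ := SetLike.not_le_iff_exists.mp h2
  by_cases ha2 : a ∉ Y₂
  · exact ⟨a, haX, ha1, ha2⟩
  by_cases hb1 : b ∉ Y₁
  · exact ⟨b, hbX, hb1, hb2⟩
  push_neg at ha2 hb1
  refine ⟨a + b, X.add_mem haX hbX, ?_, ?_⟩
  · intro h
    exact ha1 (by simpa using Y₁.sub_mem h hb1)
  · intro h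
    exact hb2 (by simpa using Y₂.sub_mem h ha2)

/-- The key product computation for the primality of the Zorn-maximal submodule. -/
private lemma aux_prim_comp {R M : Type*} [CommRing R] [AddCommGroup M] [Module R M]
    {W : Submodule R M} {r : R} {m : M} (hrm : r • m ∈ W)
    {ya yb : M} {Ia Ib : Ideal R} {na nb : ℕ}
    (hya : ya ∈ W ⊔ Submodule.span R {m})
    (hyb : yb ∈ W ⊔ Ideal.span {r} • (⊤ : Submodule R M))
    (hAa : Ia ^ na • (⊤ : Submodule R M) ≤ Submodule.span R {ya})
    (hAb : Ib ^ nb • (⊤ : Submodule R M) ≤ Submodule.span R {yb}) :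
    (Ia ^ na * Ib ^ nb) • (⊤ : Submodule R M) ≤ W := by
  have hrW : Ideal.span {r} • W ≤ W := Submodule.smul_le_right
  have hrm' : Ideal.span {r} • Submodule.span R {m} ≤ W := by
    rw [Submodule.smul_le]
    intro s hs u hu
    obtain ⟨x, rfl⟩ := Ideal.mem_span_singleton'.mp hs
    obtain ⟨t, rfl⟩ := Submodule.mem_span_singleton.mp hu
    have heq : (x * r) • t • m = (x * t) • (r • m) := by
      rw [mul_smul, smul_comm r t m, ← mul_smul]
    rw [heq]
    exact W.smul_mem _ hrm
  have hspanb : Submodule.span R {yb} ≤ W ⊔ Ideal.span {r} • (⊤ : Submodule R M) :=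
    Submodule.span_le.mpr (by simpa using hyb)
  have hspana : Submodule.span R {ya} ≤ W ⊔ Submodule.span R {m} :=
    Submodule.span_le.mpr (by simpa using hya)
  calc (Ia ^ na * Ib ^ nb) • (⊤ : Submodule R M)
      = Ia ^ na • (Ib ^ nb • (⊤ : Submodule R M)) := by
        rw [← smul_eq_mul, Submodule.smul_assoc]
  _ ≤ Ia ^ na • Submodule.span R {yb} := smul_mono_right _ hAb
  _ ≤ Ia ^ na • (W ⊔ Ideal.span {r} • (⊤ : Submodule R M)) := smul_mono_right _ hspanb
  _ = Ia ^ na • W ⊔ Ia ^ na • (Ideal.span {r} • (⊤ : Submodule R M)) := Submodule.smul_sup _ _ _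
  _ ≤ W ⊔ Ideal.span {r} • (Ia ^ na • (⊤ : Submodule R M)) :=
        sup_le_sup Submodule.smul_le_right (le_of_eq (aux_smul_smul_comm _ _ _))
  _ ≤ W ⊔ Ideal.span {r} • Submodule.span R {ya} :=
        sup_le_sup_left (smul_mono_right _ hAa) W
  _ ≤ W ⊔ Ideal.span {r} • (W ⊔ Submodule.span R {m}) :=
        sup_le_sup_left (smul_mono_right _ hspana) W
  _ = W ⊔ (Ideal.span {r} • W ⊔ Ideal.span {r} • Submodule.span R {m}) := by
        rw [Submodule.smul_sup]
  _ ≤ W := sup_le le_rfl (sup_le hrW hrm')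

/-- State for the recursive construction in the bootstrap. -/
private structure AuxState {R M : Type*} [CommRing R] [AddCommGroup M] [Module R M]
    (P : Submodule R M) where
  y : M
  I : Ideal R
  n : ℕ
  H : Submodule R M
  H' : Submodule R M
  hyP : y ∉ P
  hspan : Submodule.span R {y} = I • (⊤ : Submodule R M)
  hnpos : 0 < n
  hstab : ∀ m, n ≤ m → I ^ m • (⊤ : Submodule R M) = I ^ n • (⊤ : Submodule R M)
  hyH : y ∈ H
  hyH' : y ∉ H'
  hH'P : ¬ H' ≤ P

/-- One step of the recursive construction. -/
private lemma aux_step {R M : Type*} [CommRing R] [AddCommGroup M] [Module R M]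
    (hmul : IsMultiplicationModule R M)
    (hstar : ∀ (ι : Type*) (N : ι → Submodule R M), SatisfiesStar N)
    {P : Submodule R M} (hP : IsPrimeSubmodule P) {S : Set (Submodule R M)}
    (hSP : ∀ K ∈ S, ¬ K ≤ P) (hsInf : sInf S ≤ P)
    (st : AuxState P) :
    ∃ st' : AuxState P, st'.H = st.H' ∧ st'.y ∈ st.I ^ st.n • (⊤ : Submodule R M) := by
  have hAP : ¬ st.I ^ st.n • (⊤ : Submodule R M) ≤ P := by
    intro h
    exact st.hyP ((st.hspan ▸ aux_pow_smul_top_le hP st.hnpos.ne' h)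
      (Submodule.mem_span_singleton_self st.y))
  have hBP : ¬ st.I ^ st.n • (⊤ : Submodule R M) ⊓ st.H' ≤ P :=
    aux_inf_not_le_prime hmul hP hAP st.hH'P
  obtain ⟨K, hKS, hBK⟩ : ∃ K ∈ S, ¬ st.I ^ st.n • (⊤ : Submodule R M) ⊓ st.H' ≤ K := by
    by_contra h
    push_neg at h
    exact hBP ((le_sInf h).trans hsInf)
  have hBH'' : ¬ st.I ^ st.n • (⊤ : Submodule R M) ⊓ st.H' ≤ st.H' ⊓ K :=
    fun h => hBK (h.trans inf_le_right)
  obtain ⟨y', hy'B, hy'H'', hy'P⟩ := aux_two_avoid hBH'' hBP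
  obtain ⟨I', n', hn', hspan', hstab'⟩ := aux_stab hmul hstar y'
  refine ⟨⟨y', I', n', st.H', st.H' ⊓ K, hy'P, hspan', hn', hstab',
    (inf_le_right : _ ⊓ st.H' ≤ _) hy'B, hy'H'',
    aux_inf_not_le_prime hmul hP st.hH'P (hSP K hKS)⟩, rfl,
    (inf_le_left : _ ⊓ st.H' ≤ _) hy'B⟩

/-- BOOTSTRAP: countable coprime structure implies set-indexed coprime structure. -/
private lemma aux_bootstrap' {R M : Type*} [CommRing R] [AddCommGroup M] [Module R M]
    (hmul : IsMultiplicationModule R M)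
    (hstar : ∀ (ι : Type*) (N : ι → Submodule R M), SatisfiesStar N)
    (hc : CountablyCoprimelyStructured R M) :
    ∀ P : Submodule R M, IsPrimeSubmodule P → CoprimelyStructuredSetAt P := by
  intro P hP S hScomax hsInf
  have hSP : ∀ K ∈ S, ¬ K ≤ P := by
    intro K hK hle
    have := hScomax K hK
    rw [sup_eq_right.mpr hle] at this
    exact hP.1 this
  have hTP : ¬ (⊤ : Submodule R M) ≤ P := fun h => hP.1 (top_le_iff.mp h)
  obtain ⟨K₀, hK₀S, hK₀⟩ : ∃ K ∈ S, ¬ (⊤ : Submodule R M) ≤ K := by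
    by_contra h
    push_neg at h
    exact hTP ((le_sInf h).trans hsInf)
  obtain ⟨y₀, -, hy₀K₀, hy₀P⟩ := aux_two_avoid hK₀ hTP
  obtain ⟨I₀, n₀, hn₀, hspan₀, hstab₀⟩ := aux_stab hmul hstar y₀
  have hstep := aux_step hmul hstar hP hSP hsInf
  let st₀ : AuxState P :=
    ⟨y₀, I₀, n₀, ⊤, K₀, hy₀P, hspan₀, hn₀, hstab₀, trivial, hy₀K₀, hSP K₀ hK₀S⟩
  let f : ℕ → AuxState P := fun k =>
    Nat.rec st₀ (fun _ prev => Classical.choose (hstep prev)) k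
  have hf : ∀ k, (f (k + 1)).H = (f k).H' ∧
      (f (k + 1)).y ∈ (f k).I ^ (f k).n • (⊤ : Submodule R M) :=
    fun k => Classical.choose_spec (hstep (f k))
  have hAle : ∀ k, (f k).I ^ (f k).n • (⊤ : Submodule R M) ≤ Submodule.span R {(f k).y} :=
    fun k => aux_pow_smul_le_span (f k).hspan (f k).hnpos
  have hchain : ∀ k, (f (k + 1)).I ^ (f (k + 1)).n • (⊤ : Submodule R M)
      ≤ (f k).I ^ (f k).n • (⊤ : Submodule R M) := by
    intro k
    refine (hAle (k + 1)).trans ?_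
    exact Submodule.span_le.mpr (by simpa using (hf k).2)
  have hmono : ∀ a b, a ≤ b → (f b).I ^ (f b).n • (⊤ : Submodule R M)
      ≤ (f a).I ^ (f a).n • (⊤ : Submodule R M) := by
    intro a b hab
    induction b with
    | zero => rw [Nat.le_zero.mp hab]
    | succ b ih =>
      rcases Nat.lt_or_ge a (b + 1) with h | h
      · exact (hchain b).trans (ih (by omega))
      · rw [le_antisymm hab h]
  have hyH1 : ∀ k, (f k).y ∉ (f (k + 1)).H := fun k => (hf k).1 ▸ (f k).hyH'
  have hyD : ∀ k, (f k).y ∉ ⨅ j, (f j).H := fun k h =>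
    hyH1 k (Submodule.mem_iInf _ |>.mp h (k + 1))
  -- Zorn
  set s : Set (Submodule R M) := {W | (⨅ j, (f j).H) ≤ W ∧ ∀ k, (f k).y ∉ W} with hsdef
  obtain ⟨Wm, hDWm, hWmax⟩ := zorn_le_nonempty₀ s
    (by
      intro c hcs hchain' y₁ hy₁c
      refine ⟨sSup c, ⟨(hcs hy₁c).1.trans (le_sSup hy₁c), ?_⟩, fun z hz => le_sSup hz⟩
      intro k hk
      obtain ⟨W, hWc, hkW⟩ :=
        (Submodule.mem_sSup_of_directed ⟨y₁, hy₁c⟩ hchain'.directedOn).mp hk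
      exact (hcs hWc).2 k hkW)
    (⨅ j, (f j).H) ⟨le_rfl, hyD⟩
  obtain ⟨hDW, hyW⟩ := hWmax.1
  have hWtop : Wm ≠ ⊤ := fun h => hyW 0 (h ▸ Submodule.mem_top)
  have hWprime : IsPrimeSubmodule Wm := by
    refine ⟨hWtop, ?_⟩
    intro r m hrm
    by_cases hm : m ∈ Wm
    · exact Or.inl hm
    by_cases hr : ∀ x, r • x ∈ Wm
    · exact Or.inr hr
    exfalso
    push_neg at hr
    obtain ⟨x₀, hx₀⟩ := hr
    have hcap1 : ∃ a, (f a).y ∈ Wm ⊔ Submodule.span R {m} := by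
      by_contra h
      push_neg at h
      have hin : Wm ⊔ Submodule.span R {m} ∈ s := ⟨hDW.trans le_sup_left, h⟩
      have hle := hWmax.2 hin le_sup_left
      exact hm (hle ((le_sup_right : _ ≤ Wm ⊔ _) (Submodule.mem_span_singleton_self m)))
    have hcap2 : ∃ b, (f b).y ∈ Wm ⊔ Ideal.span {r} • (⊤ : Submodule R M) := by
      by_contra h
      push_neg at h
      have hin : Wm ⊔ Ideal.span {r} • (⊤ : Submodule R M) ∈ s := ⟨hDW.trans le_sup_left, h⟩
      have hle := hWmax.2 hin le_sup_left
      apply hx₀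
      refine hle ((le_sup_right : _ ≤ Wm ⊔ _) ?_)
      exact Submodule.smul_mem_smul (Ideal.subset_span rfl) trivial
    obtain ⟨a, hya⟩ := hcap1
    obtain ⟨b, hyb⟩ := hcap2
    have hAselfb : (f b).I ^ (f b).n • (⊤ : Submodule R M)
        = (f b).I ^ (f b).n • ((f b).I ^ (f b).n • (⊤ : Submodule R M)) := by
      conv_lhs => rw [← (f b).hstab (2 * (f b).n) (by omega)]
      rw [two_mul, pow_add, ← smul_eq_mul, Submodule.smul_assoc]
    have hAselfa : (f a).I ^ (f a).n • (⊤ : Submodule R M)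
        = (f a).I ^ (f a).n • ((f a).I ^ (f a).n • (⊤ : Submodule R M)) := by
      conv_lhs => rw [← (f a).hstab (2 * (f a).n) (by omega)]
      rw [two_mul, pow_add, ← smul_eq_mul, Submodule.smul_assoc]
    have hcomp : ((f a).I ^ (f a).n * (f b).I ^ (f b).n) • (⊤ : Submodule R M) ≤ Wm :=
      aux_prim_comp hrm hya hyb (hAle a) (hAle b)
    rcases le_total a b with hab | hab
    · have hWb : (f b).I ^ (f b).n • (⊤ : Submodule R M) ≤ Wm := by
        calc (f b).I ^ (f b).n • (⊤ : Submodule R M)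
            = (f b).I ^ (f b).n • ((f b).I ^ (f b).n • (⊤ : Submodule R M)) := hAselfb
        _ ≤ (f b).I ^ (f b).n • ((f a).I ^ (f a).n • (⊤ : Submodule R M)) :=
            smul_mono_right _ (hmono a b hab)
        _ = ((f b).I ^ (f b).n * (f a).I ^ (f a).n) • (⊤ : Submodule R M) := by
            rw [← smul_eq_mul, Submodule.smul_assoc]
        _ = ((f a).I ^ (f a).n * (f b).I ^ (f b).n) • (⊤ : Submodule R M) := by
            rw [mul_comm]
        _ ≤ Wm := hcomp
      exact hyW (b + 1) (hWb (hf b).2)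
    · have hWa : (f a).I ^ (f a).n • (⊤ : Submodule R M) ≤ Wm := by
        calc (f a).I ^ (f a).n • (⊤ : Submodule R M)
            = (f a).I ^ (f a).n • ((f a).I ^ (f a).n • (⊤ : Submodule R M)) := hAselfa
        _ ≤ (f a).I ^ (f a).n • ((f b).I ^ (f b).n • (⊤ : Submodule R M)) :=
            smul_mono_right _ (hmono b a hab)
        _ = ((f a).I ^ (f a).n * (f b).I ^ (f b).n) • (⊤ : Submodule R M) := by
            rw [← smul_eq_mul, Submodule.smul_assoc]
        _ ≤ Wm := hcomp
      exact hyW (a + 1) (hWa (hf a).2)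
  have hHno : ∀ k, ¬ (f k).H ≤ Wm := fun k h => hyW k (h (f k).hyH)
  have hHcomax : ∀ k, (f k).H ⊔ Wm = ⊤ :=
    fun k => aux_not_le_sup_prime hmul hstar hWprime (hHno k)
  exact hc Wm hWprime (fun k => (f k).H) hHcomax hDW

/-- Bootstrap: in a multiplication module in which every family of submodules satisfies
property (*), the countable coprime-structure condition already implies the set-indexed
(hence arbitrary-universe) coprime-structure condition at every prime. -/
private lemma aux_bootstrap {R M : Type*} [CommRing R] [AddCommGroup M] [Module R M]
    (hmul : IsMultiplicationModule R M)
    (hstar : ∀ (ι : Type*) (N : ι → Submodule R M), SatisfiesStar N)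
    (hc : CountablyCoprimelyStructured R M) :
    ∀ P : Submodule R M, IsPrimeSubmodule P → CoprimelyStructuredSetAt P :=
  aux_bootstrap' hmul hstar hc

/-- The set-indexed condition on `M` (at the pulled back primes) yields coprime
structure of the quotient at any universe. -/
private lemma aux_quot_cs_of_setAt {R M : Type*} [CommRing R] [AddCommGroup M]
    [Module R M] (N : Submodule R M)
    (h : ∀ P : Submodule R M, IsPrimeSubmodule P → CoprimelyStructuredSetAt P) :
    CoprimelyStructured.{u} R (M ⧸ N) := by
  intro P' hP' ι N' hsup hle
  have hPprime := aux_prime_comap hP'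
  refine h _ hPprime (Set.range fun i => Submodule.comap N.mkQ (N' i)) ?_ ?_
  · rintro K ⟨i, rfl⟩
    have hmapcomap : ∀ K : Submodule R (M ⧸ N), (Submodule.comap N.mkQ K).map N.mkQ = K := by
      intro K
      rw [Submodule.map_comap_eq, Submodule.range_mkQ, top_inf_eq]
    have hXker : N ≤ Submodule.comap N.mkQ (N' i) ⊔ Submodule.comap N.mkQ P' := by
      refine le_trans ?_ le_sup_left
      intro m hm
      have : N.mkQ m = 0 := by rw [← LinearMap.mem_ker, Submodule.ker_mkQ]; exact hm
      show N.mkQ m ∈ N' i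
      rw [this]; exact (N' i).zero_mem
    have hmap : (Submodule.comap N.mkQ (N' i) ⊔ Submodule.comap N.mkQ P').map N.mkQ = ⊤ := by
      rw [Submodule.map_sup, hmapcomap, hmapcomap, hsup i]
    have := congrArg (Submodule.comap N.mkQ) hmap
    rwa [Submodule.comap_map_eq, Submodule.ker_mkQ, sup_eq_left.mpr hXker,
      Submodule.comap_top] at this
  · rw [sInf_range]
    intro x hx
    refine hle ?_
    rw [Submodule.mem_iInf] at hx
    exact Submodule.mem_iInf _ |>.mpr fun i => hx i

/-- Let `M` be a multiplication module in which every family of submodules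
satisfies property (*), and let `N ⊆ rad 0`. Then `M ⧸ N` is coprimely structured iff `M`
is coprimely structured. -/
theorem quotient_coprimelyStructured_iff {R M : Type*} [CommRing R]
    [AddCommGroup M] [Module R M] (hmul : IsMultiplicationModule R M)
    (hstar : ∀ (ι : Type*) (N : ι → Submodule R M), SatisfiesStar N)
    (N : Submodule R M) (hN : N ≤ submoduleRad (⊥ : Submodule R M)) :
    CoprimelyStructured R (M ⧸ N) ↔ CoprimelyStructured R M := by
  constructor
  · intro hq
    have hc : CountablyCoprimelyStructured R M :=
      aux_countable_transfer hmul hstar N hN (aux_countable_of_cs hq)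
    intro P hP
    exact aux_csAt_of_setAt (aux_bootstrap hmul hstar hc P hP)
  · intro hM
    exact aux_quot_cs_of_setAt N
      (aux_bootstrap hmul hstar (aux_countable_of_cs hM))
end

section
/- Let R be a commutative ring with identity. Every Artinian multiplication R-module is coprimely structured. -/
universe v

theorem key_lemma {R M : Type*} [CommRing R] [AddCommGroup M] [Module R M]
    {P N N' : Submodule R M} (hP : IsPrimeSubmodule P)
    (I : Ideal R) (hI : N = I • (⊤ : Submodule R M))
    (hco : N ⊔ P = ⊤) (hle : N ⊓ N' ≤ P) : N' ≤ P := by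
  by_cases hIP : ∀ r ∈ I, ∀ x : M, r • x ∈ P
  · exfalso
    have : N ≤ P := by
      rw [hI]
      exact Submodule.smul_le.2 fun r hr m _ => hIP r hr m
    exact hP.1 (by rw [← hco, sup_eq_right.2 this])
  · push_neg at hIP
    obtain ⟨r, hrI, x, hx⟩ := hIP
    intro m hm
    have hrm : r • m ∈ N ⊓ N' := by
      refine ⟨?_, N'.smul_mem r hm⟩
      rw [hI]
      exact Submodule.smul_mem_smul hrI trivial
    rcases hP.2 r m (hle hrm) with h | h
    · exact h
    · exact absurd (h x) hx

/-- Every Artinian multiplication module is coprimely structured. -/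
theorem artinian_mul_coprimelyStructured {R M : Type*} [CommRing R]
    [AddCommGroup M] [Module R M] [IsArtinian R M]
    (hmul : IsMultiplicationModule R M) :
    CoprimelyStructured R M := by
  intro P hP ι N hco hle
  classical
  obtain ⟨m, ⟨F, rfl⟩, hmin⟩ := IsArtinian.set_has_minimal
    (Set.range fun F : Finset ι => F.inf N) ⟨⊤, ∅, by simp⟩
  have hFle : F.inf N ≤ P := by
    refine le_trans (le_iInf fun i => ?_) hle
    have h1 : F.inf N ⊓ N i ∈ Set.range fun F : Finset ι => F.inf N :=
      ⟨insert i F, by show (insert i F).inf N = _; rw [Finset.inf_insert, inf_comm]⟩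
    have h2 := hmin _ h1
    have heq : F.inf N ⊓ N i = F.inf N :=
      (lt_or_eq_of_le (inf_le_left : F.inf N ⊓ N i ≤ F.inf N)).resolve_left h2
    exact heq ▸ inf_le_right
  have hind : ∀ G : Finset ι, ¬ G.inf N ≤ P := by
    intro G
    induction G using Finset.induction_on with
    | empty =>
      rw [Finset.inf_empty]
      exact fun h => hP.1 (top_unique h)
    | insert _ _ hj ih =>
      rename_i j G'
      rw [Finset.inf_insert]
      intro h
      obtain ⟨I, hI⟩ := hmul (N j)
      exact ih (key_lemma hP I hI (hco j) h)
  exact hind F hFle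
end

section
/- Let R be a commutative principal ideal ring with identity, M a finitely generated multiplication R-module, m ∈ M, and I an ideal of R with Rm = IM. The following are equivalent: (i) there exists n ∈ ℕ such that I^n M = I^{n+1} M; (ii) IM + ⋃_{n=1}^∞ (0 :_M I^n) = M, where (0 :_M I^n) = {x ∈ M : I^n x = 0}. -/
universe v

/-- Let `R` be a principal ideal ring, `M` a finitely generated
multiplication `R`-module, `m ∈ M` and `I` an ideal with `Rm = IM`. Then there is
`n` with `IⁿM = Iⁿ⁺¹M` iff `IM + ⋃_{n≥1} (0 :_M Iⁿ) = M`. -/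
theorem pow_smul_stationary_iff {R M : Type*} [CommRing R] [IsPrincipalIdealRing R]
    [AddCommGroup M] [Module R M] [Module.Finite R M]
    (hmul : IsMultiplicationModule R M)
    (m : M) (I : Ideal R)
    (hI : Submodule.span R {m} = I • (⊤ : Submodule R M)) :
    (∃ n : ℕ, I ^ n • (⊤ : Submodule R M) = I ^ (n + 1) • (⊤ : Submodule R M)) ↔
      I • (⊤ : Submodule R M) ⊔
        (⨆ n : ℕ, Submodule.torsionBySet R M ((I ^ (n + 1) : Ideal R) : Set R)) = ⊤ := by
    classical
  have mono : ∀ {j k : ℕ}, j ≤ k →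
      Submodule.torsionBySet R M ((I ^ j : Ideal R) : Set R) ≤
        Submodule.torsionBySet R M ((I ^ k : Ideal R) : Set R) := by
    intro j k hjk x hx
    rw [Submodule.mem_torsionBySet_iff] at hx ⊢
    intro a
    exact hx ⟨a, Ideal.pow_le_pow_right hjk a.2⟩
  constructor
  · rintro ⟨n, hn⟩
    haveI : IsNoetherian R M := isNoetherian_of_isNoetherianRing_of_finite R M
    have hfg : (I ^ n • ⊤ : Submodule R M).FG := IsNoetherian.noetherian _
    have hle : (I ^ n • ⊤ : Submodule R M) ≤ I • (I ^ n • ⊤ : Submodule R M) := by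
      rw [← Submodule.smul_assoc, smul_eq_mul, ← pow_succ']
      exact hn.le
    obtain ⟨r, hrI, hr⟩ :=
      Submodule.exists_mem_and_smul_eq_self_of_fg_of_le_smul I _ hfg hle
    rw [eq_top_iff]
    intro x _
    have hx1 : r • x ∈ I • (⊤ : Submodule R M) :=
      Submodule.smul_mem_smul hrI Submodule.mem_top
    have hx2 : x - r • x ∈
        ⨆ k : ℕ, Submodule.torsionBySet R M ((I ^ (k + 1) : Ideal R) : Set R) := by
      refine le_iSup (fun k : ℕ =>
        Submodule.torsionBySet R M ((I ^ (k + 1) : Ideal R) : Set R)) n ?_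
      rw [Submodule.mem_torsionBySet_iff]
      rintro ⟨a, ha⟩
      have han : a ∈ I ^ n := Ideal.pow_le_pow_right (Nat.le_succ n) ha
      have hax : a • x ∈ (I ^ n • ⊤ : Submodule R M) :=
        Submodule.smul_mem_smul han Submodule.mem_top
      have := hr (a • x) hax
      simp only [smul_sub]
      rw [smul_comm a r x, this, sub_self]
    have : x = r • x + (x - r • x) := by abel
    rw [this]
    exact Submodule.add_mem_sup hx1 hx2
  · intro h
    obtain ⟨S, hS⟩ := Module.Finite.fg_top (R := R) (M := M)
    have hdir : Directed (· ≤ ·)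
        (fun k : ℕ => Submodule.torsionBySet R M ((I ^ (k + 1) : Ideal R) : Set R)) :=
      fun i j => ⟨max i j, mono (Nat.succ_le_succ (le_max_left i j)),
        mono (Nat.succ_le_succ (le_max_right i j))⟩
    have key : ∀ x : M, ∃ k : ℕ, x ∈ I • (⊤ : Submodule R M) ⊔
        Submodule.torsionBySet R M ((I ^ (k + 1) : Ideal R) : Set R) := by
      intro x
      have hx : x ∈ I • (⊤ : Submodule R M) ⊔
          (⨆ k : ℕ, Submodule.torsionBySet R M ((I ^ (k + 1) : Ideal R) : Set R)) := by
        rw [h]; trivial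
      obtain ⟨y, hy, z, hz, hyz⟩ := Submodule.mem_sup.1 hx
      obtain ⟨k, hk⟩ := (Submodule.mem_iSup_of_directed _ hdir).1 hz
      exact ⟨k, hyz ▸ Submodule.add_mem_sup hy hk⟩
    choose f hf using key
    set N : ℕ := S.sup f + 1 with hN
    have hgen : (⊤ : Submodule R M) ≤ I • (⊤ : Submodule R M) ⊔
        Submodule.torsionBySet R M ((I ^ N : Ideal R) : Set R) := by
      conv_lhs => rw [← hS]
      refine Submodule.span_le.2 ?_
      intro s hs
      have hle2 : Submodule.torsionBySet R M ((I ^ (f s + 1) : Ideal R) : Set R) ≤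
          Submodule.torsionBySet R M ((I ^ N : Ideal R) : Set R) :=
        mono (Nat.succ_le_succ (Finset.le_sup hs))
      exact sup_le_sup_left hle2 (I • (⊤ : Submodule R M)) (hf s)
    refine ⟨N, le_antisymm ?_ ?_⟩
    · calc I ^ N • (⊤ : Submodule R M)
          ≤ I ^ N • (I • (⊤ : Submodule R M) ⊔
              Submodule.torsionBySet R M ((I ^ N : Ideal R) : Set R)) :=
            Submodule.smul_mono le_rfl hgen
        _ ≤ I ^ (N + 1) • (⊤ : Submodule R M) := by
            rw [Submodule.smul_sup]
            refine sup_le ?_ ?_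
            · rw [← Submodule.smul_assoc, smul_eq_mul, ← pow_succ]
            · refine Submodule.smul_le.2 fun a ha y hy => ?_
              have : a • y = 0 := (Submodule.mem_torsionBySet_iff _ y).1 hy ⟨a, ha⟩
              rw [this]
              exact Submodule.zero_mem _
    · exact Submodule.smul_mono_left (Ideal.pow_le_pow_right (Nat.le_succ N))
end

section
/- Let R be a commutative principal ideal ring with identity and M a finitely generated faithful multiplication R-module. The following are equivalent: (i) M is zero-dimensional; (ii) the family of all submodules of M satisfies property (*); (iii) the family of all primary submodules of M satisfies property (*). -/
universe v

section Helpers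
variable {R M : Type*} [CommRing R] [AddCommGroup M] [Module R M]

lemma span_smul_single (r : R) (x : M) :
    Submodule.span R {r • x} = Ideal.span {r} • Submodule.span R {x} := by
  apply le_antisymm
  · rw [Submodule.span_le, Set.singleton_subset_iff]
    exact Submodule.mem_smul_span_singleton.2 ⟨r, Ideal.subset_span rfl, rfl⟩
  · intro z hz
    obtain ⟨c, hc, rfl⟩ := Submodule.mem_smul_span_singleton.1 hz
    obtain ⟨s, rfl⟩ := Ideal.mem_span_singleton'.1 hc
    rw [mul_smul]
    exact Submodule.smul_mem _ s (Submodule.mem_span_singleton_self _)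

/-- θ(M) = R for f.g. faithful multiplication modules. -/
lemma theta_eq_top [Module.Finite R M] (hfaith : Module.annihilator R M = ⊥)
    (hmul : IsMultiplicationModule R M) :
    (⨆ x : M, (Submodule.span R {x}).colon ⊤) = ⊤ := by
  by_contra h
  obtain ⟨m, hm, hθm⟩ := Ideal.exists_le_maximal _ h
  -- M ≠ mM by Nakayama
  have hne : ¬ (⊤ : Submodule R M) ≤ m • ⊤ := by
    intro hle
    obtain ⟨r, hr1, hr0⟩ := Submodule.exists_sub_one_mem_and_smul_eq_zero_of_fg_of_le_smul m ⊤
      (Module.Finite.fg_top) hle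
    have : r ∈ Module.annihilator R M := Module.mem_annihilator.2 fun x => hr0 x trivial
    rw [hfaith, Submodule.mem_bot] at this
    subst this
    simp only [zero_sub] at hr1
    exact hm.ne_top (Ideal.eq_top_of_isUnit_mem _ hr1 (IsUnit.neg isUnit_one))
  obtain ⟨y, -, hy⟩ := SetLike.not_le_iff_exists.1 hne
  obtain ⟨I, hI⟩ := hmul (Submodule.span R {y})
  have hIm : ¬ I ≤ m := by
    intro hIm
    exact hy (Submodule.smul_mono_left hIm (hI ▸ Submodule.mem_span_singleton_self y))
  obtain ⟨q, hqI, hqm⟩ := SetLike.not_le_iff_exists.1 hIm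
  refine hqm (hθm ?_)
  refine le_iSup (fun x : M => (Submodule.span R {x}).colon ⊤) y ?_
  rw [Submodule.mem_colon]
  intro z _
  rw [hI]
  exact Submodule.smul_mem_smul hqI trivial

end Helpers

section Helpers2
variable {R M : Type*} [CommRing R] [AddCommGroup M] [Module R M]

/-- Cancellation: for f.g. faithful multiplication modules, `IM ≤ JM → I ≤ J`. -/
lemma smul_top_cancel [Module.Finite R M] (hfaith : Module.annihilator R M = ⊥)
    (hmul : IsMultiplicationModule R M) {I J : Ideal R}
    (h : I • (⊤ : Submodule R M) ≤ J • ⊤) : I ≤ J := by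
  intro r hr
  set T : Ideal R := (J : Submodule R R).colon (Submodule.span R {r}) with hT
  have hTmem : ∀ c : R, c ∈ T ↔ r * c ∈ J := by
    intro c
    rw [hT, Submodule.mem_colon]
    constructor
    · intro hc
      have := hc r (Submodule.mem_span_singleton_self r)
      rwa [smul_eq_mul, mul_comm] at this
    · intro hc p hp
      obtain ⟨s, rfl⟩ := Submodule.mem_span_singleton.1 hp
      have : c • s • r = s * (r * c) := by
        simp only [smul_eq_mul]; ring
      rw [this]
      exact Ideal.mul_mem_left _ _ hc
  have key : ∀ x : M, (Submodule.span R {x}).colon ⊤ ≤ T.radical := by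
    intro x a ha
    rw [Submodule.mem_colon] at ha
    have ha' : ∀ y : M, a • y ∈ Submodule.span R {x} := fun y => ha y trivial
    have hrx : r • x ∈ J • (⊤ : Submodule R M) :=
      h (Submodule.smul_mem_smul hr trivial)
    -- a • (r • x) ∈ J • span {x}
    have h2 : a • (r • x) ∈ J • Submodule.span R {x} := by
      have hmap : (J • (⊤ : Submodule R M)).map (a • (LinearMap.id : M →ₗ[R] M)) =
          J • ((⊤ : Submodule R M).map (a • LinearMap.id)) := Submodule.map_smul'' _ _ _
      have hmem : a • (r • x) ∈ (J • (⊤ : Submodule R M)).map (a • (LinearMap.id : M →ₗ[R] M)) :=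
        ⟨r • x, hrx, rfl⟩
      rw [hmap] at hmem
      refine Submodule.smul_mono le_rfl ?_ hmem
      rintro z ⟨y, -, rfl⟩
      exact ha' y
    obtain ⟨c, hcJ, hcx⟩ := Submodule.mem_smul_span_singleton.1 h2
    have hzero : (a * r - c) • x = 0 := by
      rw [sub_smul, mul_smul, hcx, sub_self]
    have hann : (a * r - c) * a ∈ Module.annihilator R M := by
      rw [Module.mem_annihilator]
      intro y
      obtain ⟨s, hs⟩ := Submodule.mem_span_singleton.1 (ha' y)
      rw [mul_smul, ← hs, smul_comm, hzero, smul_zero]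
    rw [hfaith, Submodule.mem_bot, sub_mul, sub_eq_zero] at hann
    have : r * (a * a) ∈ J := by
      have : r * (a * a) = c * a := by rw [← hann]; ring
      rw [this]
      exact Ideal.mul_mem_right _ _ hcJ
    exact ⟨2, by rwa [pow_two, hTmem]⟩
  have hrad : T.radical = ⊤ := by
    rw [eq_top_iff, ← theta_eq_top hfaith hmul]
    exact iSup_le key
  have : T = ⊤ := Ideal.radical_eq_top.1 hrad
  have h1 : (1 : R) ∈ T := this ▸ trivial
  rw [hTmem, mul_one] at h1
  exact h1

end Helpers2

section Helpers3
variable {R M : Type*} [CommRing R] [AddCommGroup M] [Module R M] [Module.Finite R M]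
variable (hfaith : Module.annihilator R M = ⊥) (hmul : IsMultiplicationModule R M)
include hfaith hmul

lemma colon_smul_top (I : Ideal R) :
    ((I • (⊤ : Submodule R M)).colon ⊤) = I := by
  apply le_antisymm
  · intro r hr
    rw [Submodule.mem_colon] at hr
    have : Ideal.span {r} • (⊤ : Submodule R M) ≤ I • ⊤ := by
      rw [Submodule.smul_le]
      intro c hc y _
      obtain ⟨s, rfl⟩ := Ideal.mem_span_singleton'.1 hc
      rw [mul_smul]
      exact Submodule.smul_mem _ s (hr y trivial)
    have := smul_top_cancel hfaith hmul this
    exact this (Submodule.mem_span_singleton_self r)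
  · intro r hr
    rw [Submodule.mem_colon]
    exact fun y _ => Submodule.smul_mem_smul hr trivial

lemma smul_top_inj {I J : Ideal R} (h : I • (⊤ : Submodule R M) = J • ⊤) : I = J :=
  le_antisymm (smul_top_cancel hfaith hmul h.le) (smul_top_cancel hfaith hmul h.ge)

lemma smul_top_ne_top {I : Ideal R} (h : I ≠ ⊤) : I • (⊤ : Submodule R M) ≠ ⊤ := by
  intro he
  exact h (smul_top_inj hfaith hmul (by rw [he, Submodule.top_smul]))

/-- Every prime submodule is `p•⊤` for a prime ideal `p`. -/
lemma prime_submodule_eq (P : Submodule R M) (hP : IsPrimeSubmodule P) :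
    ∃ p : Ideal R, p.IsPrime ∧ P = p • ⊤ := by
  obtain ⟨I, hI⟩ := hmul P
  refine ⟨I, ⟨?_, ?_⟩, hI⟩
  · intro he
    exact hP.1 (by rw [hI, he, Submodule.top_smul])
  · intro r s hrs
    by_cases hr : ∀ y : M, r • y ∈ P
    · left
      rw [← colon_smul_top hfaith hmul I, Submodule.mem_colon, ← hI]
      exact fun y _ => hr y
    · right
      rw [← colon_smul_top hfaith hmul I, Submodule.mem_colon, ← hI]
      intro y _
      have hmem : r • s • y ∈ P := by
        rw [← mul_smul, hI]
        exact Submodule.smul_mem_smul hrs trivial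
      rcases hP.2 r (s • y) hmem with h1 | h2
      · exact h1
      · exact absurd h2 hr

/-- `p•⊤` is a prime submodule for each prime ideal `p`. -/
lemma isPrimeSubmodule_smul_top {p : Ideal R} (hp : p.IsPrime) :
    IsPrimeSubmodule (p • (⊤ : Submodule R M)) := by
  refine ⟨smul_top_ne_top hfaith hmul hp.ne_top, ?_⟩
  intro r x hrx
  by_cases hx : x ∈ p • (⊤ : Submodule R M)
  · exact Or.inl hx
  · right
    obtain ⟨J, hJ⟩ := hmul (Submodule.span R {x})
    have hJp : ¬ J ≤ p := by
      intro hle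
      exact hx (Submodule.smul_mono hle le_rfl
        (hJ ▸ Submodule.mem_span_singleton_self x))
    obtain ⟨b, hbJ, hbp⟩ := SetLike.not_le_iff_exists.1 hJp
    have hspan : Ideal.span {r} * J ≤ p := by
      apply smul_top_cancel hfaith hmul
      have : (Ideal.span {r} * J) • (⊤ : Submodule R M) = Ideal.span {r} • (J • ⊤) :=
        Submodule.smul_assoc _ _ _
      rw [this, ← hJ, ← span_smul_single, Submodule.span_le, Set.singleton_subset_iff]
      exact hrx
    have hrb : r * b ∈ p := hspan (Ideal.mul_mem_mul (Ideal.mem_span_singleton_self r) hbJ)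
    have hrp : r ∈ p := ((hp.mem_or_mem hrb).resolve_right hbp)
    exact fun y => Submodule.smul_mem_smul hrp trivial

end Helpers3

section Helpers4
variable {R M : Type*} [CommRing R] [AddCommGroup M] [Module R M] [Module.Finite R M]
variable (hfaith : Module.annihilator R M = ⊥) (hmul : IsMultiplicationModule R M)
include hfaith hmul

lemma mem_rad_iff {x : M} {I K : Ideal R} (hx : Submodule.span R {x} = I • ⊤) :
    x ∈ submoduleRad (K • (⊤ : Submodule R M)) ↔ I ≤ K.radical := by
  constructor
  · intro h
    rw [Ideal.radical_eq_sInf]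
    apply le_sInf
    rintro p ⟨hKp, hp⟩
    apply smul_top_cancel hfaith hmul (I := I) (J := p)
    rw [← hx, Submodule.span_le, Set.singleton_subset_iff]
    exact Submodule.mem_sInf.1 h _ ⟨isPrimeSubmodule_smul_top hfaith hmul hp,
      Submodule.smul_mono hKp le_rfl⟩
  · intro h
    apply Submodule.mem_sInf.2
    rintro P ⟨hP, hKP⟩
    obtain ⟨q, hq, rfl⟩ := prime_submodule_eq hfaith hmul P hP
    have hKq : K ≤ q := smul_top_cancel hfaith hmul hKP
    have hIq : I ≤ q := le_trans h (by
      rw [Ideal.radical_eq_sInf]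
      exact sInf_le ⟨hKq, hq⟩)
    have : x ∈ Submodule.span R {x} := Submodule.mem_span_singleton_self x
    rw [hx] at this
    exact Submodule.smul_mono hIq le_rfl this

lemma coatom_iff_maximal {p : Ideal R} (hp : p ≠ ⊤) :
    IsCoatom (p • (⊤ : Submodule R M)) ↔ p.IsMaximal := by
  constructor
  · intro h
    rw [Ideal.isMaximal_def]
    refine ⟨hp, ?_⟩
    intro K hK
    have h1 : p • (⊤ : Submodule R M) ≤ K • ⊤ := Submodule.smul_mono hK.le le_rfl
    have h2 : p • (⊤ : Submodule R M) ≠ K • ⊤ := by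
      intro he
      exact hK.ne (smul_top_inj hfaith hmul he)
    have h3 := h.2 _ (lt_of_le_of_ne h1 h2)
    rw [eq_top_iff]
    apply smul_top_cancel hfaith hmul (I := (⊤ : Ideal R)) (J := K)
    rw [Submodule.top_smul]
    exact h3.ge
  · intro h
    refine ⟨smul_top_ne_top hfaith hmul hp, ?_⟩
    intro N hN
    obtain ⟨K, rfl⟩ := hmul N
    have hpK : p ≤ K := smul_top_cancel hfaith hmul hN.le
    have : p ≠ K := by
      intro he
      exact hN.ne (he ▸ rfl)
    have : K = ⊤ := (Ideal.isMaximal_def.1 h).2 _ (lt_of_le_of_ne hpK this)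
    rw [this, Submodule.top_smul]

lemma zeroDim_iff_ring :
    ZeroDimensionalModule R M ↔ ∀ p : Ideal R, p.IsPrime → p.IsMaximal := by
  constructor
  · intro h p hp
    exact (coatom_iff_maximal hfaith hmul hp.ne_top).1
      (h _ (isPrimeSubmodule_smul_top hfaith hmul hp))
  · intro h P hP
    obtain ⟨p, hp, rfl⟩ := prime_submodule_eq hfaith hmul P hP
    exact (coatom_iff_maximal hfaith hmul hp.ne_top).2 (h p hp)

lemma isPrimary_pow_max {m : Ideal R} (hm : m.IsMaximal) {k : ℕ} (hk : k ≠ 0) :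
    IsPrimarySubmodule ((m ^ k) • (⊤ : Submodule R M)) := by
  have hrad : (m ^ k).radical = m := by
    rw [Ideal.radical_pow _ hk, hm.isPrime.radical]
  have hprimary : (m ^ k).IsPrimary := Ideal.isPrimary_of_isMaximal_radical (by rw [hrad]; exact hm)
  have hne : m ^ k ≠ ⊤ := by
    intro he
    exact hm.ne_top (top_le_iff.1 (he ▸ Ideal.pow_le_self hk))
  refine ⟨smul_top_ne_top hfaith hmul hne, ?_⟩
  intro r x hrx hx
  rw [colon_smul_top hfaith hmul, hrad]
  obtain ⟨J, hJ⟩ := hmul (Submodule.span R {x})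
  have hspan : Ideal.span {r} * J ≤ m ^ k := by
    apply smul_top_cancel hfaith hmul
    have : (Ideal.span {r} * J) • (⊤ : Submodule R M) = Ideal.span {r} • (J • ⊤) :=
      Submodule.smul_assoc _ _ _
    rw [this, ← hJ, ← span_smul_single, Submodule.span_le, Set.singleton_subset_iff]
    exact hrx
  have hJk : ¬ J ≤ m ^ k := by
    intro hle
    exact hx (Submodule.smul_mono hle le_rfl
      (hJ ▸ Submodule.mem_span_singleton_self x))
  obtain ⟨b, hbJ, hbk⟩ := SetLike.not_le_iff_exists.1 hJk
  have hrb : b * r ∈ m ^ k := by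
    rw [mul_comm]
    exact hspan (Ideal.mul_mem_mul (Ideal.mem_span_singleton_self r) hbJ)
  rcases (Ideal.isPrimary_iff.1 hprimary).2 hrb with h1 | h2
  · exact absurd h1 hbk
  · rwa [hrad] at h2

end Helpers4

section PowStab
variable {R : Type*} [CommRing R]

/-- In a zero-dimensional Noetherian ring, for every `a` there is `n` with
`a ^ n ∈ (a ^ m)` for all `m`. -/
lemma pow_stabilizes [IsNoetherianRing R]
    (hdim : ∀ p : Ideal R, p.IsPrime → p.IsMaximal) (a : R) :
    ∃ n : ℕ, ∀ m : ℕ, a ^ n ∈ Ideal.span {a ^ m} := by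
  have hfmem : ∀ (c : R) (k : ℕ),
      c ∈ (⊥ : Ideal R).colon (Ideal.span {a ^ k}) ↔ c * a ^ k = 0 := by
    intro c k
    rw [Submodule.mem_colon]
    constructor
    · intro hc
      have := hc (a ^ k) (Ideal.mem_span_singleton_self _)
      simpa [smul_eq_mul] using this
    · intro hc p hp
      obtain ⟨s, rfl⟩ := Ideal.mem_span_singleton'.1 hp
      have : c • (s * a ^ k) = s * (c * a ^ k) := by rw [smul_eq_mul]; ring
      rw [this, hc, mul_zero]
      exact Submodule.zero_mem _
  have hmono : Monotone fun k : ℕ => (⊥ : Ideal R).colon (Ideal.span {a ^ k}) := by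
    intro k l hkl c hc
    rw [hfmem] at hc ⊢
    have : a ^ l = a ^ k * a ^ (l - k) := by rw [← pow_add]; congr 1; omega
    rw [this, ← mul_assoc, hc, zero_mul]
  obtain ⟨n, hn⟩ := (monotone_stabilizes_iff_noetherian.2 inferInstance)
    ⟨fun k : ℕ => (⊥ : Ideal R).colon (Ideal.span {a ^ k}), hmono⟩
  have key : a ^ n ∈ Ideal.span {a ^ (n + 1)} := by
    by_contra hcon
    have hC : (Ideal.span {a ^ (n+1)}).colon (Ideal.span {a ^ n}) ≠ ⊤ := by
      intro he
      apply hcon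
      have h1 : (1 : R) ∈ (Ideal.span {a ^ (n+1)}).colon (Ideal.span {a ^ n}) :=
        he ▸ trivial
      have := Submodule.mem_colon.1 h1 (a ^ n) (Ideal.mem_span_singleton_self _)
      simpa using this
    obtain ⟨𝔪, h𝔪, hC𝔪⟩ := Ideal.exists_le_maximal _ hC
    have ha𝔪 : a ∈ 𝔪 := by
      apply hC𝔪
      rw [Submodule.mem_colon]
      intro p hp
      obtain ⟨s, rfl⟩ := Ideal.mem_span_singleton'.1 hp
      have : a • (s * a ^ n) = s * a ^ (n+1) := by rw [smul_eq_mul]; ring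
      rw [this]
      exact Ideal.mem_span_singleton'.2 ⟨s, rfl⟩
    haveI := h𝔪.isPrime
    set S := Localization.AtPrime 𝔪 with hS
    have hnil : IsNilpotent (algebraMap R S a) := by
      rw [← mem_nilradical, nilradical_eq_sInf, Submodule.mem_sInf]
      intro q hq
      haveI : Ideal.IsPrime q := hq
      obtain ⟨hp', hdisj⟩ :=
        (IsLocalization.isPrime_iff_isPrime_disjoint 𝔪.primeCompl S q).1 hq
      have hle : Ideal.comap (algebraMap R S) q ≤ 𝔪 := by
        intro z hz
        by_contra hz𝔪
        exact Set.disjoint_left.1 hdisj hz𝔪 hz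
      have heq : Ideal.comap (algebraMap R S) q = 𝔪 :=
        (hdim _ hp').eq_of_le h𝔪.ne_top hle
      have h3 : a ∈ Ideal.comap (algebraMap R S) q := by rw [heq]; exact ha𝔪
      exact Ideal.mem_comap.1 h3
    obtain ⟨k, hk⟩ := hnil
    rw [← map_pow] at hk
    obtain ⟨s, hs⟩ := (IsLocalization.map_eq_zero_iff 𝔪.primeCompl S _).1 hk
    have hsn : (s : R) * a ^ n = 0 := by
      have hsK : (s : R) * a ^ (max k n) = 0 := by
        have : a ^ (max k n) = a ^ k * a ^ (max k n - k) := by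
          rw [← pow_add]; congr 1; omega
        rw [this, ← mul_assoc, hs, zero_mul]
      have := hn (max k n) (le_max_right _ _)
      have hmem : (s : R) ∈ (⊥ : Ideal R).colon (Ideal.span {a ^ (max k n)}) :=
        (hfmem _ _).2 hsK
      have h2 : (⊥ : Ideal R).colon (Ideal.span {a ^ n}) =
          (⊥ : Ideal R).colon (Ideal.span {a ^ (max k n)}) := this
      exact (hfmem _ _).1 (h2 ▸ hmem)
    have : (s : R) ∈ 𝔪 := by
      apply hC𝔪
      rw [Submodule.mem_colon]
      intro p hp
      obtain ⟨t, rfl⟩ := Ideal.mem_span_singleton'.1 hp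
      have : (s : R) • (t * a ^ n) = t * ((s : R) * a ^ n) := by rw [smul_eq_mul]; ring
      rw [this, hsn, mul_zero]
      exact Submodule.zero_mem _
    exact s.2 this
  -- now conclude
  obtain ⟨c, hc⟩ := Ideal.mem_span_singleton'.1 key
  have hiter : ∀ j : ℕ, a ^ n = c ^ j * a ^ (n + j) := by
    intro j
    induction j with
    | zero => simp
    | succ j ih =>
      have : a ^ (n + (j+1)) = a ^ (n + 1) * a ^ j := by rw [← pow_add]; congr 1; omega
      rw [this]
      calc a ^ n = c ^ j * a ^ (n + j) := ih
        _ = c ^ j * (a ^ n * a ^ j) := by rw [← pow_add]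
        _ = c ^ j * ((c * a ^ (n+1)) * a ^ j) := by rw [hc]
        _ = c ^ (j+1) * (a ^ (n+1) * a ^ j) := by ring
  refine ⟨n, fun m => ?_⟩
  rcases le_or_gt m n with hmn | hnm
  · refine Ideal.mem_span_singleton'.2 ⟨a ^ (n - m), ?_⟩
    rw [← pow_add]; congr 1; omega
  · refine Ideal.mem_span_singleton'.2 ⟨c ^ (m - n), ?_⟩
    have := hiter (m - n)
    rw [this]; congr 2; omega

end PowStab

section Main
variable {R M : Type*} [CommRing R] [IsPrincipalIdealRing R] [AddCommGroup M] [Module R M]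
  [Module.Finite R M]
variable (hfaith : Module.annihilator R M = ⊥) (hmul : IsMultiplicationModule R M)
include hfaith hmul

lemma dir1 (hz : ZeroDimensionalModule R M) :
    SatisfiesStar (fun N : Submodule R M => N) := by
  intro x
  obtain ⟨I₀, hI₀⟩ := hmul (Submodule.span R {x})
  obtain ⟨a, ha⟩ := (IsPrincipalIdealRing.principal I₀).principal
  have hdim := (zeroDim_iff_ring hfaith hmul).1 hz
  obtain ⟨n, hn⟩ := pow_stabilizes hdim a
  refine ⟨n, fun N hradN I hI => ?_⟩
  have hII₀ : I = I₀ := smul_top_inj hfaith hmul (by rw [← hI, hI₀])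
  subst hII₀
  obtain ⟨K, hK⟩ := hmul N
  have hradN' : x ∈ submoduleRad (K • (⊤ : Submodule R M)) := by
    rwa [← hK]
  have hIrad : I ≤ K.radical := (mem_rad_iff hfaith hmul hI₀).1 hradN'
  have haK : a ∈ K.radical := hIrad (ha ▸ Ideal.mem_span_singleton_self a)
  obtain ⟨m, ham⟩ := Ideal.mem_radical_iff.1 haK
  have hanK : a ^ n ∈ K := by
    obtain ⟨s, hs⟩ := Ideal.mem_span_singleton'.1 (hn m)
    rw [← hs]
    exact Ideal.mul_mem_left _ _ ham
  have hpow : I ^ n ≤ K := by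
    rw [ha, show (Submodule.span R {a} : Ideal R) = Ideal.span {a} from rfl,
      Ideal.span_singleton_pow, Ideal.span_le, Set.singleton_subset_iff]
    exact hanK
  show I ^ n • (⊤ : Submodule R M) ≤ N
  rw [hK]
  exact Submodule.smul_mono hpow le_rfl

lemma dir2
    (hstar : SatisfiesStar (fun Q : {Q : Submodule R M // IsPrimarySubmodule Q} => Q.1)) :
    ZeroDimensionalModule R M := by
  intro P hP
  obtain ⟨p, hp, rfl⟩ := prime_submodule_eq hfaith hmul P hP
  rw [coatom_iff_maximal hfaith hmul hp.ne_top]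
  by_contra hpmax
  obtain ⟨m, hm, hpm⟩ := Ideal.exists_le_maximal p hp.ne_top
  have hne : p ≠ m := fun h => hpmax (h ▸ hm)
  obtain ⟨t, ht⟩ := (IsPrincipalIdealRing.principal m).principal
  have htm : t ∈ m := ht ▸ Submodule.mem_span_singleton_self t
  have htp : t ∉ p := by
    intro h
    refine hne (le_antisymm hpm ?_)
    rw [ht, show (Submodule.span R {t} : Ideal R) = Ideal.span {t} from rfl,
      Ideal.span_le, Set.singleton_subset_iff]
    exact h
  -- use θ(M) = R to find a cyclic-dominating element outside m
  have hex : ∃ x₀ : M, ¬ (Submodule.span R {x₀}).colon ⊤ ≤ m := by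
    by_contra hcon
    push_neg at hcon
    have : (⨆ x : M, (Submodule.span R {x}).colon ⊤) ≤ m := iSup_le hcon
    rw [theta_eq_top hfaith hmul] at this
    exact hm.ne_top (top_le_iff.1 this)
  obtain ⟨x₀, hx₀⟩ := hex
  obtain ⟨a, haR, ham⟩ := SetLike.not_le_iff_exists.1 hx₀
  obtain ⟨J₀, hJ₀⟩ := hmul (Submodule.span R {x₀})
  have haJ : a ∈ J₀ := by
    rw [hJ₀, colon_smul_top hfaith hmul] at haR
    exact haR
  set x := t • x₀ with hxdef
  have hx : Submodule.span R {x} = (m * J₀) • ⊤ := by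
    rw [hxdef, span_smul_single, hJ₀, ← Submodule.smul_assoc]
    congr 1
    rw [show (Ideal.span {t} : Ideal R) = m from ht.symm]
    rfl
  obtain ⟨n, hn⟩ := hstar x
  have hc : ∀ k : ℕ, t ^ n * a ^ n ∈ m ^ k := by
    intro k
    rcases Nat.eq_zero_or_pos k with hk0 | hk0
    · subst hk0; simp
    · have hk0' : k ≠ 0 := Nat.pos_iff_ne_zero.1 hk0
      have hQ : IsPrimarySubmodule ((m ^ k) • (⊤ : Submodule R M)) :=
        isPrimary_pow_max hfaith hmul hm hk0'
      have hxrad : x ∈ submoduleRad ((m ^ k) • (⊤ : Submodule R M)) := by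
        refine (mem_rad_iff hfaith hmul hx).2 ?_
        rw [Ideal.radical_pow _ hk0', hm.isPrime.radical]
        exact le_trans Ideal.mul_le_inf inf_le_left
      have hle := hn ⟨(m ^ k) • ⊤, hQ⟩ hxrad (m * J₀) hx
      have hle' : (m * J₀) ^ n ≤ m ^ k := smul_top_cancel hfaith hmul hle
      apply hle'
      rw [mul_pow]
      exact Ideal.mul_mem_mul (Ideal.pow_mem_pow htm n) (Ideal.pow_mem_pow haJ n)
  -- pass to the quotient domain R/p
  haveI hpi : p.IsPrime := hp
  set f := Ideal.Quotient.mk p with hf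
  haveI : IsPrincipalIdealRing (R ⧸ p) :=
    IsPrincipalIdealRing.of_surjective f Ideal.Quotient.mk_surjective
  have hmtop : m.map f ≠ ⊤ := by
    intro he
    have hcm := Ideal.comap_map_of_surjective f Ideal.Quotient.mk_surjective m
    rw [he, Ideal.comap_top] at hcm
    have hker : Ideal.comap f ⊥ = p := by
      rw [← RingHom.ker_eq_comap_bot, hf, Ideal.mk_ker]
    rw [hker, sup_eq_left.2 hpm] at hcm
    exact hm.ne_top hcm.symm
  have hbot := Ideal.iInf_pow_eq_bot_of_isDomain (m.map f) hmtop
  have hcbar : f (t ^ n * a ^ n) ∈ (⊥ : Ideal (R ⧸ p)) := by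
    rw [← hbot, Ideal.mem_iInf]
    intro i
    rw [← Ideal.map_pow]
    exact Ideal.mem_map_of_mem f (hc i)
  rw [Ideal.mem_bot, Ideal.Quotient.eq_zero_iff_mem] at hcbar
  rcases hp.mem_or_mem hcbar with h1 | h2
  · exact htp (hp.mem_of_pow_mem _ h1)
  · exact ham (hpm (hp.mem_of_pow_mem _ h2))

end Main
/-- For a finitely generated faithful multiplication module over a
principal ideal ring, the following are equivalent: (i) `M` is zero-dimensional;
(ii) the family of all submodules of `M` satisfies property (*); (iii) the family of
all primary submodules of `M` satisfies property (*). -/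
theorem zeroDimensional_iff_satisfiesStar {R M : Type*} [CommRing R]
    [IsPrincipalIdealRing R] [AddCommGroup M] [Module R M] [Module.Finite R M]
    (hfaith : Module.annihilator R M = ⊥)
    (hmul : IsMultiplicationModule R M) :
    (ZeroDimensionalModule R M ↔ SatisfiesStar (fun N : Submodule R M => N)) ∧
    (ZeroDimensionalModule R M ↔
      SatisfiesStar (fun Q : {Q : Submodule R M // IsPrimarySubmodule Q} => Q.1)) := by
  have hres : SatisfiesStar (fun N : Submodule R M => N) →
      SatisfiesStar (fun Q : {Q : Submodule R M // IsPrimarySubmodule Q} => Q.1) := by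
    intro h x
    obtain ⟨n, hn⟩ := h x
    exact ⟨n, fun Q => hn Q.1⟩
  constructor
  · exact ⟨dir1 hfaith hmul, fun h => dir2 hfaith hmul (hres h)⟩
  · exact ⟨fun hz => hres (dir1 hfaith hmul hz), dir2 hfaith hmul⟩
end
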